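/- arXiv:2209.04756 — 2 statements merged into one kernel-verified Lean document; each statement's English description precedes it below -/
import Mathlib

section
/- Let ℓ ≥ 2 be a fixed integer and let 𝐦 be a fixed vector of non-negative integers indexed by the unordered pairs of distinct elements of [ℓ]. Then there exists a constant C > 0 (depending only on ℓ and 𝐦) such that for every integer n ≥ 2 the following holds: if 𝓕_1, …, 𝓕_ℓ ⊆ 2^{[n]} is an extremal collection of (nonempty) families with the 𝐦-overlapping property, then there is a set I ⊆ [n] with |I| ≤ C · log₂ n such that for every x ∈ [n] \ I there exists k ∈ [ℓ] with d_k(x) ≥ 1/3. -/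
/-- Families `𝓕 1, …, 𝓕 ℓ` of subsets of `[n]` satisfy the `m`-overlapping property:
for distinct `k₁ k₂` and sets `F₁ ∈ 𝓕 k₁`, `F₂ ∈ 𝓕 k₂` we have `|F₁ ∩ F₂| ≤ m k₁ k₂`.
The vector `m` indexed by unordered pairs is encoded as a symmetric function. -/
def MOverlap (n ℓ : ℕ) (m : Fin ℓ → Fin ℓ → ℕ) (𝓕 : Fin ℓ → Finset (Finset (Fin n))) : Prop :=
  ∀ k₁ k₂ : Fin ℓ, k₁ ≠ k₂ → ∀ F₁ ∈ 𝓕 k₁, ∀ F₂ ∈ 𝓕 k₂, (F₁ ∩ F₂).card ≤ m k₁ k₂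

/-- `s*(n, ℓ, m)`: the maximum of `|𝓕 1|⋯|𝓕 ℓ|` over collections of families of subsets
of `[n]` with the `m`-overlapping property. -/
noncomputable def sStar (n ℓ : ℕ) (m : Fin ℓ → Fin ℓ → ℕ) : ℕ :=
  open Classical in
  Finset.univ.sup (fun 𝓕 : Fin ℓ → Finset (Finset (Fin n)) =>
    if MOverlap n ℓ m 𝓕 then ∏ k, (𝓕 k).card else 0)

/-- The unordered pairs of distinct elements of `K`, represented as ordered pairs `(i, j)`
with `i < j`. -/
def pairsOf {ℓ : ℕ} (K : Finset (Fin ℓ)) : Finset (Fin ℓ × Fin ℓ) :=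
  K.offDiag.filter (fun p => p.1 < p.2)

/-- The normalized degree `d(F, 𝓕) = |{G ∈ 𝓕 : F ⊆ G}| / |𝓕|` of a set `F` in a family
`𝓕` of subsets of `[n]`. -/
noncomputable def ndeg {n : ℕ} (𝓕 : Finset (Finset (Fin n))) (F : Finset (Fin n)) : ℝ :=
  ((𝓕.filter (fun G => F ⊆ G)).card : ℝ) / (𝓕.card : ℝ)

/-!
Fix `x` and restrict every family to its sets avoiding `x`; doubling one of the restricted
families by adding `x` to each of its sets keeps the overlapping property and yields a
collection of size `2 ∏ₖ (1 - d_k(x)) |𝓕_k|`. Extremality therefore forces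
`∏ₖ (1 - d_k(x)) ≤ 1/2`, hence `∑ₖ d_k(x) ≥ 1/2`, so if every `d_k(x) < 1/3` then two distinct
indices `i ≠ j` have `d_i(x), d_j(x) ≥ 1/(6ℓ)`. Double counting pairs of sets gives
`∑ₓ d_i(x) d_j(x) ≤ m_{ij}`, so there are at most `(6ℓ)² m_{ij}` such `x` for each pair: the
exceptional set is even bounded independently of `n`.
-/

open Finset

theorem one_sub_sum_le_prod_one_sub {ι R : Type*} [CommRing R] [PartialOrder R] [IsOrderedRing R]
    (s : Finset ι) (f : ι → R) (h0 : ∀ i ∈ s, 0 ≤ f i) (h1 : ∀ i ∈ s, f i ≤ 1) :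
    1 - ∑ i ∈ s, f i ≤ ∏ i ∈ s, (1 - f i) := by
  classical
  induction s using Finset.induction_on with
  | empty => simp
  | insert a s ha ih =>
    rw [sum_insert ha, prod_insert ha]
    have hfa : 0 ≤ 1 - f a := sub_nonneg.mpr (h1 a (mem_insert_self a s))
    have hsum : 0 ≤ f a * ∑ i ∈ s, f i :=
      mul_nonneg (h0 a (mem_insert_self a s))
        (sum_nonneg fun i hi => h0 i (mem_insert_of_mem hi))
    calc 1 - (f a + ∑ i ∈ s, f i)
        ≤ 1 - (f a + ∑ i ∈ s, f i) + f a * ∑ i ∈ s, f i := le_add_of_nonneg_right hsum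
      _ = (1 - f a) * (1 - ∑ i ∈ s, f i) := by ring
      _ ≤ (1 - f a) * ∏ i ∈ s, (1 - f i) :=
        mul_le_mul_of_nonneg_left
          (ih (fun i hi => h0 i (mem_insert_of_mem hi)) fun i hi => h1 i (mem_insert_of_mem hi))
          hfa

theorem exists_ne_le_of_half_le_sum {ι : Type*} [Fintype ι] [Nonempty ι] (d : ι → ℝ)
    (hsum : 1 / 2 ≤ ∑ i, d i) (hd : ∀ i, d i < 1 / 3) :
    ∃ i j, i ≠ j ∧ 1 / (6 * Fintype.card ι) ≤ d i ∧ 1 / (6 * Fintype.card ι) ≤ d j := by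
  classical
  set c : ℝ := 1 / (6 * Fintype.card ι)
  by_contra! hcon
  obtain ⟨i₀, -, hi₀⟩ := exists_max_image univ d univ_nonempty
  have hsmall : ∀ k ∈ univ.erase i₀, d k ≤ c := fun k hk => by
    by_contra! hk'
    exact (hcon i₀ k (ne_of_mem_erase hk).symm (hk'.le.trans (hi₀ k (mem_univ k)))).not_ge hk'.le
  have hcard : ((univ.erase i₀).card : ℝ) * c ≤ 1 / 6 := by
    have hpos : (0 : ℝ) < Fintype.card ι := by exact_mod_cast Fintype.card_pos
    calc ((univ.erase i₀).card : ℝ) * c ≤ Fintype.card ι * c :=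
          mul_le_mul_of_nonneg_right (by exact_mod_cast card_le_univ _) (by positivity)
      _ = 1 / 6 := by simp only [c]; field_simp
  have := calc ∑ i, d i = d i₀ + ∑ k ∈ univ.erase i₀, d k := (add_sum_erase _ _ (mem_univ i₀)).symm
    _ ≤ d i₀ + (univ.erase i₀).card * c := by
        gcongr
        simpa using sum_le_sum hsmall
  linarith [hd i₀]

theorem sum_card_filter_mem_mul_card_filter_mem {α : Type*} [Fintype α] [DecidableEq α]
    (𝓐 𝓑 : Finset (Finset α)) :
    ∑ x, #{A ∈ 𝓐 | x ∈ A} * #{B ∈ 𝓑 | x ∈ B} = ∑ A ∈ 𝓐, ∑ B ∈ 𝓑, #(A ∩ B) := by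
  calc ∑ x, #{A ∈ 𝓐 | x ∈ A} * #{B ∈ 𝓑 | x ∈ B}
      = ∑ x, ∑ A ∈ 𝓐, ∑ B ∈ 𝓑, if x ∈ A ∩ B then 1 else 0 := by
        refine sum_congr rfl fun x _ => ?_
        rw [card_filter, card_filter, sum_mul_sum]
        simp only [mem_inter, ite_zero_mul_ite_zero, mul_one]
    _ = ∑ A ∈ 𝓐, ∑ B ∈ 𝓑, #(A ∩ B) := by
        rw [sum_comm]
        refine sum_congr rfl fun A _ => ?_
        rw [sum_comm]
        simp only [← card_filter, filter_mem_eq_inter, univ_inter]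

section Degree

variable {n : ℕ}

theorem ndeg_singleton (𝓕 : Finset (Finset (Fin n))) (x : Fin n) :
    ndeg 𝓕 {x} = (#{F ∈ 𝓕 | x ∈ F} : ℝ) / #𝓕 := by
  simp [ndeg, singleton_subset_iff]

theorem ndeg_nonneg (𝓕 : Finset (Finset (Fin n))) (F : Finset (Fin n)) : 0 ≤ ndeg 𝓕 F := by
  unfold ndeg; positivity

theorem ndeg_le_one (𝓕 : Finset (Finset (Fin n))) (F : Finset (Fin n)) : ndeg 𝓕 F ≤ 1 :=
  div_le_one_of_le₀ (by exact_mod_cast card_filter_le _ _) (Nat.cast_nonneg _)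

theorem card_filter_notMem_eq (𝓕 : Finset (Finset (Fin n))) (x : Fin n) :
    (#{F ∈ 𝓕 | x ∉ F} : ℝ) = (1 - ndeg 𝓕 {x}) * #𝓕 := by
  rcases 𝓕.eq_empty_or_nonempty with rfl | h𝓕
  · simp
  have hsplit : (#{F ∈ 𝓕 | x ∈ F} : ℝ) + #{F ∈ 𝓕 | x ∉ F} = #𝓕 := by
    exact_mod_cast card_filter_add_card_filter_not (s := 𝓕) (fun F => x ∈ F)
  rw [ndeg_singleton, sub_mul, div_mul_cancel₀ _ (by exact_mod_cast h𝓕.card_ne_zero)]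
  linarith

theorem sum_ndeg_mul_ndeg_le (𝓐 𝓑 : Finset (Finset (Fin n))) (t : ℕ)
    (h : ∀ A ∈ 𝓐, ∀ B ∈ 𝓑, #(A ∩ B) ≤ t) :
    ∑ x, ndeg 𝓐 {x} * ndeg 𝓑 {x} ≤ t := by
  have hcount : ∑ x, #{A ∈ 𝓐 | x ∈ A} * #{B ∈ 𝓑 | x ∈ B} ≤ t * (#𝓐 * #𝓑) := by
    rw [sum_card_filter_mem_mul_card_filter_mem]
    calc ∑ A ∈ 𝓐, ∑ B ∈ 𝓑, #(A ∩ B) ≤ ∑ A ∈ 𝓐, ∑ B ∈ 𝓑, t :=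
          sum_le_sum fun A hA => sum_le_sum fun B hB => h A hA B hB
      _ = t * (#𝓐 * #𝓑) := by simp only [sum_const, smul_eq_mul]; ring
  simp_rw [ndeg_singleton, div_mul_div_comm, ← sum_div]
  exact div_le_of_le_mul₀ (by positivity) (Nat.cast_nonneg _) (by exact_mod_cast hcount)

theorem card_filter_le_of_le_ndeg (𝓐 𝓑 : Finset (Finset (Fin n))) (t : ℕ)
    (h : ∀ A ∈ 𝓐, ∀ B ∈ 𝓑, #(A ∩ B) ≤ t) {c : ℝ} (hc : 0 < c) :
    (#{x | c ≤ ndeg 𝓐 {x} ∧ c ≤ ndeg 𝓑 {x}} : ℝ) ≤ t / c ^ 2 := by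
  rw [le_div_iff₀ (by positivity)]
  calc (#{x | c ≤ ndeg 𝓐 {x} ∧ c ≤ ndeg 𝓑 {x}} : ℝ) * c ^ 2
      = ∑ x with c ≤ ndeg 𝓐 {x} ∧ c ≤ ndeg 𝓑 {x}, c * c := by simp [sq]
    _ ≤ ∑ x with c ≤ ndeg 𝓐 {x} ∧ c ≤ ndeg 𝓑 {x}, ndeg 𝓐 {x} * ndeg 𝓑 {x} :=
        sum_le_sum fun x hx => by
          obtain ⟨hA, hB⟩ := (mem_filter.mp hx).2
          exact mul_le_mul hA hB hc.le (hc.le.trans hA)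
    _ ≤ ∑ x, ndeg 𝓐 {x} * ndeg 𝓑 {x} :=
        sum_le_sum_of_subset_of_nonneg (subset_univ _) fun x _ _ =>
          mul_nonneg (ndeg_nonneg _ _) (ndeg_nonneg _ _)
    _ ≤ t := sum_ndeg_mul_ndeg_le 𝓐 𝓑 t h

end Degree

theorem card_union_image_insert {α : Type*} [DecidableEq α] {𝓑 : Finset (Finset α)} {x : α}
    (hx : ∀ B ∈ 𝓑, x ∉ B) : #(𝓑 ∪ 𝓑.image (insert x)) = 2 * #𝓑 := by
  have hinj : Set.InjOn (insert x) (𝓑 : Set (Finset α)) := fun A hA B hB hAB => by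
    rw [← erase_insert (hx A hA), ← erase_insert (hx B hB), hAB]
  have hdisj : Disjoint 𝓑 (𝓑.image (insert x)) :=
    disjoint_left.mpr fun B hB hB' => by
      obtain ⟨A, -, rfl⟩ := mem_image.mp hB'
      exact hx _ hB (mem_insert_self x A)
  rw [card_union_of_disjoint hdisj, card_image_of_injOn hinj, two_mul]

section Extremal

variable {n ℓ : ℕ} {m : Fin ℓ → Fin ℓ → ℕ} {𝓕 : Fin ℓ → Finset (Finset (Fin n))}

theorem prod_card_le_sStar (h : MOverlap n ℓ m 𝓕) :
    ∏ k, #(𝓕 k) ≤ sStar n ℓ m := by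
  unfold sStar
  exact le_sup_of_le (mem_univ 𝓕) (by rw [if_pos h])

theorem MOverlap.mono {𝓖 : Fin ℓ → Finset (Finset (Fin n))} (h : MOverlap n ℓ m 𝓕)
    (hsub : ∀ k, 𝓖 k ⊆ 𝓕 k) : MOverlap n ℓ m 𝓖 :=
  fun k₁ k₂ hne F₁ h₁ F₂ h₂ => h k₁ k₂ hne F₁ (hsub k₁ h₁) F₂ (hsub k₂ h₂)

theorem MOverlap.update_union_image_insert {𝓑 : Fin ℓ → Finset (Finset (Fin n))}
    (h : MOverlap n ℓ m 𝓑) {x : Fin n} (hx : ∀ k, ∀ B ∈ 𝓑 k, x ∉ B) (k₀ : Fin ℓ) :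
    MOverlap n ℓ m (Function.update 𝓑 k₀ (𝓑 k₀ ∪ (𝓑 k₀).image (insert x))) := by
  have herase : ∀ k, ∀ F ∈ Function.update 𝓑 k₀ (𝓑 k₀ ∪ (𝓑 k₀).image (insert x)) k,
      F.erase x ∈ 𝓑 k := by
    intro k F hF
    rcases eq_or_ne k k₀ with rfl | hk
    · rw [Function.update_self, mem_union, mem_image] at hF
      rcases hF with hF | ⟨B, hB, rfl⟩
      · rwa [erase_eq_of_notMem (hx k F hF)]
      · rwa [erase_insert (hx k B hB)]
    · rw [Function.update_of_ne hk] at hF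
      rwa [erase_eq_of_notMem (hx k F hF)]
  have hmem : ∀ k ≠ k₀, ∀ F ∈ Function.update 𝓑 k₀ (𝓑 k₀ ∪ (𝓑 k₀).image (insert x)) k,
      F ∈ 𝓑 k := fun k hk F hF => by rwa [Function.update_of_ne hk] at hF
  intro k₁ k₂ hne F₁ h₁ F₂ h₂
  -- one of the two sets avoids `x`, so erasing `x` from the other keeps their intersection
  rcases eq_or_ne k₂ k₀ with rfl | hk₂
  · have hF₁ := hmem k₁ hne F₁ h₁
    rw [← erase_eq_of_notMem (hx k₁ F₁ hF₁), erase_inter, ← inter_erase]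
    exact h k₁ k₂ hne F₁ hF₁ _ (herase k₂ F₂ h₂)
  · have hF₂ := hmem k₂ hk₂ F₂ h₂
    rw [← erase_eq_of_notMem (hx k₂ F₂ hF₂), inter_erase, ← erase_inter]
    exact h k₁ k₂ hne _ (herase k₁ F₁ h₁) F₂ hF₂

theorem two_mul_prod_card_filter_notMem_le_sStar (h : MOverlap n ℓ m 𝓕) (x : Fin n) (k₀ : Fin ℓ) :
    2 * ∏ k, #{F ∈ 𝓕 k | x ∉ F} ≤ sStar n ℓ m := by
  set 𝓑 : Fin ℓ → Finset (Finset (Fin n)) := fun k => {F ∈ 𝓕 k | x ∉ F}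
  have hx : ∀ k, ∀ B ∈ 𝓑 k, x ∉ B := fun k B hB => (mem_filter.mp hB).2
  calc 2 * ∏ k, #(𝓑 k)
      = ∏ k, #(Function.update 𝓑 k₀ (𝓑 k₀ ∪ (𝓑 k₀).image (insert x)) k) := by
        rw [Fintype.prod_eq_mul_prod_compl k₀, Fintype.prod_eq_mul_prod_compl k₀,
          Function.update_self, card_union_image_insert (hx k₀), mul_assoc]
        congr 2
        exact prod_congr rfl fun k hk => by
          rw [Function.update_of_ne (by simpa using hk)]
    _ ≤ sStar n ℓ m :=
        prod_card_le_sStar ((h.mono fun k => filter_subset _ _).update_union_image_insert hx k₀)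

theorem prod_one_sub_ndeg_le_half (hne : ∀ k, (𝓕 k).Nonempty) (hov : MOverlap n ℓ m 𝓕)
    (hext : ∏ k, #(𝓕 k) = sStar n ℓ m) (x : Fin n) (k₀ : Fin ℓ) :
    ∏ k, (1 - ndeg (𝓕 k) {x}) ≤ 1 / 2 := by
  have hpos : (0 : ℝ) < ∏ k, (#(𝓕 k) : ℝ) :=
    prod_pos fun k _ => by exact_mod_cast (hne k).card_pos
  have hdouble : 2 * ((∏ k, (1 - ndeg (𝓕 k) {x})) * ∏ k, (#(𝓕 k) : ℝ)) ≤ ∏ k, (#(𝓕 k) : ℝ) := by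
    rw [← prod_mul_distrib]
    simp_rw [← card_filter_notMem_eq]
    exact_mod_cast hext ▸ two_mul_prod_card_filter_notMem_le_sStar hov x k₀
  nlinarith

theorem half_le_sum_ndeg (hne : ∀ k, (𝓕 k).Nonempty) (hov : MOverlap n ℓ m 𝓕)
    (hext : ∏ k, #(𝓕 k) = sStar n ℓ m) (x : Fin n) (k₀ : Fin ℓ) :
    1 / 2 ≤ ∑ k, ndeg (𝓕 k) {x} := by
  have := one_sub_sum_le_prod_one_sub univ (fun k => ndeg (𝓕 k) {x})
    (fun k _ => ndeg_nonneg _ _) (fun k _ => ndeg_le_one _ _)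
  linarith [prod_one_sub_ndeg_le_half hne hov hext x k₀]

theorem card_filter_forall_ndeg_lt_le (hℓ : 0 < ℓ) (hne : ∀ k, (𝓕 k).Nonempty)
    (hov : MOverlap n ℓ m 𝓕) (hext : ∏ k, #(𝓕 k) = sStar n ℓ m) :
    (#{x | ∀ k, ndeg (𝓕 k) {x} < 1 / 3} : ℝ) ≤ (6 * ℓ) ^ 2 * ∑ i, ∑ j, (m i j : ℝ) := by
  have : Nonempty (Fin ℓ) := ⟨⟨0, hℓ⟩⟩
  set c : ℝ := 1 / (6 * ℓ)
  have hc : 0 < c := by positivity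
  have hsub : ({x | ∀ k, ndeg (𝓕 k) {x} < 1 / 3} : Finset (Fin n)) ⊆
      univ.offDiag.biUnion fun p => {x | c ≤ ndeg (𝓕 p.1) {x} ∧ c ≤ ndeg (𝓕 p.2) {x}} := by
    intro x hx
    obtain ⟨i, j, hij, hi, hj⟩ := exists_ne_le_of_half_le_sum _
      (half_le_sum_ndeg hne hov hext x ⟨0, hℓ⟩) (by simpa using hx)
    rw [Fintype.card_fin] at hi hj
    exact mem_biUnion.mpr ⟨(i, j), by simpa using hij, mem_filter.mpr ⟨mem_univ x, hi, hj⟩⟩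
  calc (#{x | ∀ k, ndeg (𝓕 k) {x} < 1 / 3} : ℝ)
      ≤ ∑ p ∈ univ.offDiag, (#{x | c ≤ ndeg (𝓕 p.1) {x} ∧ c ≤ ndeg (𝓕 p.2) {x}} : ℝ) := by
        exact_mod_cast (card_le_card hsub).trans card_biUnion_le
    _ ≤ ∑ p ∈ univ.offDiag, (m p.1 p.2 : ℝ) / c ^ 2 :=
        sum_le_sum fun p hp => card_filter_le_of_le_ndeg _ _ _
          (hov p.1 p.2 (mem_offDiag.mp hp).2.2) hc
    _ ≤ ∑ p : Fin ℓ × Fin ℓ, (m p.1 p.2 : ℝ) / c ^ 2 :=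
        sum_le_sum_of_subset_of_nonneg (subset_univ _) fun _ _ _ => by positivity
    _ = (6 * ℓ) ^ 2 * ∑ i, ∑ j, (m i j : ℝ) := by
        simp only [Fintype.sum_prod_type, mul_sum, c, one_div, inv_pow, div_inv_eq_mul, mul_comm]

end Extremal

theorem statement14_general (ℓ : ℕ) (hℓ : 2 ≤ ℓ) (m : Fin ℓ → Fin ℓ → ℕ) :
    ∃ C : ℝ, 0 < C ∧ ∀ n : ℕ, 2 ≤ n →
      ∀ 𝓕 : Fin ℓ → Finset (Finset (Fin n)),
        (∀ k, (𝓕 k).Nonempty) →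
        MOverlap n ℓ m 𝓕 →
        (∏ k, (𝓕 k).card) = sStar n ℓ m →
        ∃ I : Finset (Fin n), (I.card : ℝ) ≤ C * Real.logb 2 n ∧
          ∀ x : Fin n, x ∉ I → ∃ k : Fin ℓ, (1 : ℝ) / 3 ≤ ndeg (𝓕 k) {x} := by
  set C : ℝ := (6 * ℓ) ^ 2 * ∑ i, ∑ j, (m i j : ℝ)
  refine ⟨C + 1, by positivity, fun n hn 𝓕 hne hov hext => ?_⟩
  refine ⟨({x | ∀ k, ndeg (𝓕 k) {x} < 1 / 3} : Finset (Fin n)), ?_, fun x hx => by simpa using hx⟩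
  have hlog : 1 ≤ Real.logb 2 n := by
    rw [Real.le_logb_iff_rpow_le one_lt_two (by positivity), Real.rpow_one]
    exact_mod_cast hn
  calc (#{x | ∀ k, ndeg (𝓕 k) {x} < 1 / 3} : ℝ)
      ≤ C := card_filter_forall_ndeg_lt_le (by omega) hne hov hext
    _ ≤ C + 1 := le_add_of_nonneg_right zero_le_one
    _ ≤ (C + 1) * Real.logb 2 n := le_mul_of_one_le_right (by positivity) hlog

/-- Proposition (most elements have large degree in some family): for fixed `ℓ ≥ 2` and a
fixed symmetric vector `m`, there is a constant `C > 0` such that for every `n ≥ 2` and every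
extremal collection `𝓕 1, …, 𝓕 ℓ` of nonempty families with the `m`-overlapping property,
there is a set `I ⊆ [n]` with `|I| ≤ C·log₂ n` such that every `x ∈ [n] \ I` has
`d_k(x) ≥ 1/3` for some `k`. -/
theorem statement14 (ℓ : ℕ) (hℓ : 2 ≤ ℓ) (m : Fin ℓ → Fin ℓ → ℕ)
    (hsym : ∀ i j : Fin ℓ, m i j = m j i) :
    ∃ C : ℝ, 0 < C ∧ ∀ n : ℕ, 2 ≤ n →
      ∀ 𝓕 : Fin ℓ → Finset (Finset (Fin n)),
        (∀ k, (𝓕 k).Nonempty) →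
        MOverlap n ℓ m 𝓕 →
        (∏ k, (𝓕 k).card) = sStar n ℓ m →
        ∃ I : Finset (Fin n), (I.card : ℝ) ≤ C * Real.logb 2 n ∧
          ∀ x : Fin n, x ∉ I → ∃ k : Fin ℓ, (1 : ℝ) / 3 ≤ ndeg (𝓕 k) {x} :=
  statement14_general ℓ hℓ m
end

section
/- Let ℓ ≥ 2 be a fixed integer and let 𝐦 be a fixed vector of non-negative integers indexed by the unordered pairs of distinct elements of [ℓ]. There exists a constant C > 0 (depending only on ℓ and 𝐦) such that for every positive integer n and every extremal collection 𝓕_1, …, 𝓕_ℓ ⊆ 2^{[n]} of families with the 𝐦-overlapping property, there exist subfamilies 𝓕'_k ⊆ 𝓕_k (k ∈ [ℓ]) with the following two properties: (1) for every element x ∈ [n], the number of indices k ∈ [ℓ] such that some set of 𝓕'_k contains x is at most 2; (2) for every k ∈ [ℓ], |𝓕'_k| ≥ (1 − C/√n) · |𝓕_k|. -/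
namespace S16
open Finset
open scoped Classical

variable {n ℓ : ℕ} {m : Fin ℓ → Fin ℓ → ℕ}

/-- product of family sizes -/
def pr (𝓕 : Fin ℓ → Finset (Finset (Fin n))) : ℕ := ∏ k, (𝓕 k).card

/-- all sets of all families lie in `S` -/
def Supp (S : Finset (Fin n)) (𝓕 : Fin ℓ → Finset (Finset (Fin n))) : Prop :=
  ∀ k, ∀ F ∈ 𝓕 k, F ⊆ S

/-- score of a collection -/
noncomputable def score (m : Fin ℓ → Fin ℓ → ℕ) (S : Finset (Fin n))
    (𝓕 : Fin ℓ → Finset (Finset (Fin n))) : ℕ :=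
  if MOverlap n ℓ m 𝓕 ∧ Supp S 𝓕 then pr 𝓕 else 0

/-- ground-set-relative maximum product -/
noncomputable def SS (n ℓ : ℕ) (m : Fin ℓ → Fin ℓ → ℕ) (S : Finset (Fin n)) : ℕ :=
  Finset.univ.sup (score m S)

lemma le_SS {S : Finset (Fin n)} {𝓕 : Fin ℓ → Finset (Finset (Fin n))}
    (h1 : MOverlap n ℓ m 𝓕) (h2 : Supp S 𝓕) : pr 𝓕 ≤ SS n ℓ m S := by
  have := Finset.le_sup (f := score m S) (mem_univ 𝓕)
  rwa [score, if_pos ⟨h1, h2⟩] at this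

lemma SS_univ_eq : SS n ℓ m Finset.univ = sStar n ℓ m := by
  unfold SS sStar score pr
  apply Finset.sup_congr rfl
  intro 𝓕 _
  apply if_congr _ rfl rfl
  constructor
  · exact fun h => h.1
  · exact fun h => ⟨h, fun k F _ => F.subset_univ⟩

lemma one_le_SS (hl : 0 < ℓ) (S : Finset (Fin n)) : 1 ≤ SS n ℓ m S := by
  have h := le_SS (m := m) (S := S) (𝓕 := fun _ => {∅}) ?_ ?_
  · simpa [pr] using h
  · intro k₁ k₂ hne F₁ h₁ F₂ h₂
    simp only [mem_singleton] at h₁ h₂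
    subst h₁; subst h₂; simp
  · intro k F hF
    simp only [mem_singleton] at hF
    subst hF; simp

lemma exists_max (hl : 0 < ℓ) (S : Finset (Fin n)) :
    ∃ 𝓕 : Fin ℓ → Finset (Finset (Fin n)),
      MOverlap n ℓ m 𝓕 ∧ Supp S 𝓕 ∧ pr 𝓕 = SS n ℓ m S := by
  obtain ⟨𝓕, -, h𝓕⟩ := Finset.exists_mem_eq_sup (univ : Finset (Fin ℓ → Finset (Finset (Fin n))))
    univ_nonempty (score m S)
  have hSS : SS n ℓ m S = score m S 𝓕 := h𝓕
  by_cases hc : MOverlap n ℓ m 𝓕 ∧ Supp S 𝓕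
  · exact ⟨𝓕, hc.1, hc.2, by rw [hSS, score, if_pos hc]⟩
  · exfalso
    rw [score, if_neg hc] at hSS
    have := one_le_SS (m := m) hl S
    omega
lemma MOverlap_of_subset {𝓕 𝓖 : Fin ℓ → Finset (Finset (Fin n))}
    (hsub : ∀ k, 𝓖 k ⊆ 𝓕 k) (h : MOverlap n ℓ m 𝓕) : MOverlap n ℓ m 𝓖 :=
  fun k₁ k₂ hne F₁ h₁ F₂ h₂ => h k₁ k₂ hne F₁ (hsub k₁ h₁) F₂ (hsub k₂ h₂)

lemma two_pow_le_SS (hl : 0 < ℓ) (S : Finset (Fin n)) :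
    2 ^ S.card ≤ SS n ℓ m S := by
  classical
  set k₀ : Fin ℓ := ⟨0, hl⟩
  set 𝓕 : Fin ℓ → Finset (Finset (Fin n)) :=
    fun k => if k = k₀ then S.powerset else {∅} with h𝓕
  have h := le_SS (m := m) (S := S) (𝓕 := 𝓕) ?_ ?_
  · calc 2 ^ S.card = pr 𝓕 := by
          rw [pr, h𝓕]
          rw [Finset.prod_eq_single k₀ (fun k _ hk => by simp [hk])
            (fun h => absurd (mem_univ k₀) h)]
          simp
      _ ≤ _ := h
  · intro k₁ k₂ hne F₁ h₁ F₂ h₂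
    rcases eq_or_ne k₁ k₀ with rfl | hk1
    · have : F₂ = ∅ := by simpa [h𝓕, if_neg hne.symm] using h₂
      subst this; simp
    · have : F₁ = ∅ := by simpa [h𝓕, if_neg hk1] using h₁
      subst this; simp
  · intro k F hF
    rcases eq_or_ne k k₀ with rfl | hk
    · simpa [h𝓕] using hF
    · have : F = ∅ := by simpa [h𝓕, if_neg hk] using hF
      subst this; simp

lemma SS_mono_m {m' : Fin ℓ → Fin ℓ → ℕ} (hm : ∀ i j, i ≠ j → m i j ≤ m' i j)
    (S : Finset (Fin n)) : SS n ℓ m S ≤ SS n ℓ m' S := by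
  apply Finset.sup_le
  intro 𝓕 _
  rw [score]
  split_ifs with hc
  · exact le_SS (fun k₁ k₂ hne F₁ h₁ F₂ h₂ =>
      le_trans (hc.1 k₁ k₂ hne F₁ h₁ F₂ h₂) (hm k₁ k₂ hne)) hc.2
  · exact Nat.zero_le _

/-- doubling: SS S ≥ 2 · SS (S.erase x) for x ∈ S -/
lemma two_SS_erase_le (hl : 0 < ℓ) {S : Finset (Fin n)} {x : Fin n} (hx : x ∈ S) :
    2 * SS n ℓ m (S.erase x) ≤ SS n ℓ m S := by
  classical
  obtain ⟨𝓖, hov, hsupp, hpr⟩ := exists_max (m := m) hl (S.erase x)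
  set k₀ : Fin ℓ := ⟨0, hl⟩
  have hxG : ∀ G ∈ 𝓖 k₀, x ∉ G := fun G hG hxG => (mem_erase.1 (hsupp k₀ G hG hxG)).1 rfl
  set 𝓖' : Fin ℓ → Finset (Finset (Fin n)) :=
    Function.update 𝓖 k₀ (𝓖 k₀ ∪ (𝓖 k₀).image (insert x)) with h𝓖'
  have hmemk0 : ∀ {F}, F ∈ 𝓖' k₀ ↔ F ∈ 𝓖 k₀ ∨ ∃ G ∈ 𝓖 k₀, F = insert x G := by
    intro F
    simp [h𝓖', Function.update_self, mem_union, mem_image, eq_comm]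
  have hmemne : ∀ {k}, k ≠ k₀ → 𝓖' k = 𝓖 k := fun hk => Function.update_of_ne hk _ _
  -- intersection preservation
  have hint : ∀ k₁ k₂, k₁ ≠ k₂ → ∀ F₁ ∈ 𝓖' k₁, ∀ F₂ ∈ 𝓖' k₂, (F₁ ∩ F₂).card ≤ m k₁ k₂ := by
    intro k₁ k₂ hne F₁ h₁ F₂ h₂
    -- reduce each Fᵢ to a base Gᵢ with same intersections (x in at most one side matters)
    have key : ∀ (G₁ G₂ : Finset (Fin n)), G₁ ∈ 𝓖 k₁ → G₂ ∈ 𝓖 k₂ →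
        (F₁ = G₁ ∨ (k₁ = k₀ ∧ F₁ = insert x G₁)) → (F₂ = G₂ ∨ (k₂ = k₀ ∧ F₂ = insert x G₂)) →
        (F₁ ∩ F₂).card ≤ m k₁ k₂ := by
      intro G₁ G₂ hG₁ hG₂ hc₁ hc₂
      have base := hov k₁ k₂ hne G₁ hG₁ G₂ hG₂
      have hx₁ : x ∉ G₁ := fun h => (mem_erase.1 (hsupp k₁ G₁ hG₁ h)).1 rfl
      have hx₂ : x ∉ G₂ := fun h => (mem_erase.1 (hsupp k₂ G₂ hG₂ h)).1 rfl
      rcases hc₁ with h1 | ⟨hk1, h1⟩ <;> rcases hc₂ with h2 | ⟨hk2, h2⟩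
      · rw [h1, h2]; exact base
      · rw [h1, h2, Finset.inter_insert_of_notMem hx₁]; exact base
      · rw [h1, h2, Finset.insert_inter_of_notMem hx₂]; exact base
      · exact absurd (hk1.trans hk2.symm) hne
    rcases eq_or_ne k₁ k₀ with rfl | hk₁
    · have h₂' : F₂ ∈ 𝓖 k₂ := by rwa [hmemne hne.symm] at h₂
      rcases hmemk0.1 h₁ with h | ⟨G, hG, rfl⟩
      · exact key F₁ F₂ h h₂' (Or.inl rfl) (Or.inl rfl)
      · exact key G F₂ hG h₂' (Or.inr ⟨rfl, rfl⟩) (Or.inl rfl)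
    · have h₁' : F₁ ∈ 𝓖 k₁ := by rwa [hmemne hk₁] at h₁
      rcases eq_or_ne k₂ k₀ with rfl | hk₂
      · rcases hmemk0.1 h₂ with h | ⟨G, hG, rfl⟩
        · exact key F₁ F₂ h₁' h (Or.inl rfl) (Or.inl rfl)
        · exact key F₁ G h₁' hG (Or.inl rfl) (Or.inr ⟨rfl, rfl⟩)
      · have h₂' : F₂ ∈ 𝓖 k₂ := by rwa [hmemne hk₂] at h₂
        exact key F₁ F₂ h₁' h₂' (Or.inl rfl) (Or.inl rfl)
  have hsupp' : Supp S 𝓖' := by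
    intro k F hF
    rcases eq_or_ne k k₀ with rfl | hk
    · rcases hmemk0.1 hF with h | ⟨G, hG, rfl⟩
      · exact (hsupp k₀ F h).trans (erase_subset x S)
      · intro a ha
        rcases mem_insert.1 ha with rfl | ha
        · exact hx
        · exact (hsupp k₀ G hG).trans (erase_subset x S) ha
    · rw [hmemne hk] at hF
      exact (hsupp k F hF).trans (erase_subset x S)
  have hcard : (𝓖' k₀).card = 2 * (𝓖 k₀).card := by
    have hinj : Set.InjOn (insert x) ((𝓖 k₀ : Finset (Finset (Fin n))) : Set (Finset (Fin n))) := by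
      intro G₁ hG₁ G₂ hG₂ he
      have h1 : x ∉ G₁ := hxG _ hG₁
      have h2 : x ∉ G₂ := hxG _ hG₂
      have h3 : (insert x G₁).erase x = (insert x G₂).erase x := by rw [he]
      rwa [Finset.erase_insert h1, Finset.erase_insert h2] at h3
    have hdisj : Disjoint (𝓖 k₀) ((𝓖 k₀).image (insert x)) := by
      rw [Finset.disjoint_left]
      intro F hF hF'
      obtain ⟨G, hG, rfl⟩ := mem_image.1 hF'
      exact hxG _ hF (mem_insert_self x G)
    rw [h𝓖', Function.update_self, card_union_of_disjoint hdisj, card_image_of_injOn hinj]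
    ring
  have hpr' : pr 𝓖' = 2 * pr 𝓖 := by
    rw [pr, pr, ← Finset.prod_erase_mul _ _ (mem_univ k₀),
      ← Finset.prod_erase_mul _ _ (mem_univ k₀), hcard]
    have : ∀ k ∈ univ.erase k₀, (𝓖' k).card = (𝓖 k).card := by
      intro k hk
      rw [hmemne (mem_erase.1 hk).1]
    rw [Finset.prod_congr rfl this]
    ring
  calc 2 * SS n ℓ m (S.erase x) = pr 𝓖' := by rw [hpr', hpr]
    _ ≤ SS n ℓ m S := le_SS hint hsupp'

/-- downward closed collection -/
def DC (𝓕 : Fin ℓ → Finset (Finset (Fin n))) : Prop :=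
  ∀ k, ∀ F ∈ 𝓕 k, ∀ F', F' ⊆ F → F' ∈ 𝓕 k

lemma pos_of_max (hl : 0 < ℓ) {S : Finset (Fin n)} {𝓕 : Fin ℓ → Finset (Finset (Fin n))}
    (hmax : pr 𝓕 = SS n ℓ m S) : ∀ k, 0 < (𝓕 k).card := by
  have h1 : 0 < pr 𝓕 := by
    rw [hmax]; exact lt_of_lt_of_le Nat.zero_lt_one (one_le_SS hl S)
  rw [pr] at h1
  exact fun k => Nat.pos_of_ne_zero (fun h => by
    rw [Finset.prod_eq_zero (mem_univ k) h] at h1; exact lt_irrefl 0 h1)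

lemma max_DC (hl : 0 < ℓ) {S : Finset (Fin n)} {𝓕 : Fin ℓ → Finset (Finset (Fin n))}
    (hov : MOverlap n ℓ m 𝓕) (hsupp : Supp S 𝓕) (hmax : pr 𝓕 = SS n ℓ m S) : DC 𝓕 := by
  classical
  intro k F hF F' hF'
  by_contra hmem
  set 𝓕' : Fin ℓ → Finset (Finset (Fin n)) := Function.update 𝓕 k (insert F' (𝓕 k)) with h𝓕'
  have lift : ∀ {j G}, G ∈ 𝓕' j → ∃ H, H ∈ 𝓕 j ∧ G ⊆ H := by
    intro j G hG
    rcases eq_or_ne j k with rfl | hj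
    · rw [h𝓕', Function.update_self] at hG
      rcases mem_insert.1 hG with rfl | h
      · exact ⟨F, hF, hF'⟩
      · exact ⟨G, h, Subset.rfl⟩
    · rw [h𝓕', Function.update_of_ne hj] at hG
      exact ⟨G, hG, Subset.rfl⟩
  have hint : MOverlap n ℓ m 𝓕' := by
    intro k₁ k₂ hne F₁ h₁ F₂ h₂
    obtain ⟨H₁, hH₁, hs₁⟩ := lift h₁
    obtain ⟨H₂, hH₂, hs₂⟩ := lift h₂
    exact le_trans (card_le_card (inter_subset_inter hs₁ hs₂)) (hov _ _ hne _ hH₁ _ hH₂)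
  have hsupp' : Supp S 𝓕' := by
    intro j G hG
    obtain ⟨H, hH, hs⟩ := lift hG
    exact hs.trans (hsupp j H hH)
  have hle : pr 𝓕' ≤ SS n ℓ m S := le_SS hint hsupp'
  have hgt : SS n ℓ m S < pr 𝓕' := by
    rw [← hmax, pr, pr, ← Finset.prod_erase_mul _ _ (mem_univ k),
      ← Finset.prod_erase_mul _ _ (mem_univ k)]
    have heq : ∀ j ∈ univ.erase k, (𝓕' j).card = (𝓕 j).card := by
      intro j hj
      rw [h𝓕', Function.update_of_ne (mem_erase.1 hj).1]
    rw [Finset.prod_congr rfl heq]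
    have hpos : 0 < ∏ j ∈ univ.erase k, (𝓕 j).card := by
      apply Finset.prod_pos
      exact fun j _ => pos_of_max hl hmax j
    have hcard : (𝓕 k).card < (𝓕' k).card := by
      rw [h𝓕', Function.update_self, card_insert_of_notMem hmem]
      omega
    calc (∏ j ∈ univ.erase k, (𝓕 j).card) * (𝓕 k).card
        < (∏ j ∈ univ.erase k, (𝓕 j).card) * (𝓕' k).card :=
          mul_lt_mul_of_pos_left hcard hpos
      _ = _ := rfl
  omega

variable (𝓕 : Fin ℓ → Finset (Finset (Fin n))) (x : Fin n)

/-- number of sets of family k containing x -/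
def deg (k : Fin ℓ) : ℕ := ((𝓕 k).filter (fun F => x ∈ F)).card

/-- sets of family k avoiding x -/
def res (k : Fin ℓ) : Finset (Finset (Fin n)) := (𝓕 k).filter (fun F => x ∉ F)

/-- link: sets containing x, with x removed -/
def lnk (k : Fin ℓ) : Finset (Finset (Fin n)) :=
  ((𝓕 k).filter (fun F => x ∈ F)).image (fun F => F.erase x)

variable {𝓕 x}

lemma card_res (k : Fin ℓ) : (res 𝓕 x k).card + deg 𝓕 x k = (𝓕 k).card := by
  rw [res, deg, add_comm]
  exact Finset.card_filter_add_card_filter_not _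

lemma card_lnk (k : Fin ℓ) : (lnk 𝓕 x k).card = deg 𝓕 x k := by
  rw [lnk, deg]
  apply card_image_of_injOn
  intro F₁ h₁ F₂ h₂ he
  have hx₁ : x ∈ F₁ := (mem_filter.1 h₁).2
  have hx₂ : x ∈ F₂ := (mem_filter.1 h₂).2
  have : insert x (F₁.erase x) = insert x (F₂.erase x) := by
    simp only at he
    rw [he]
  rwa [Finset.insert_erase hx₁, Finset.insert_erase hx₂] at this

lemma lnk_mem {k : Fin ℓ} {G : Finset (Fin n)} :
    G ∈ lnk 𝓕 x k ↔ ∃ F ∈ 𝓕 k, x ∈ F ∧ G = F.erase x := by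
  simp only [lnk, mem_image, mem_filter]
  constructor
  · rintro ⟨F, ⟨hF, hx⟩, rfl⟩; exact ⟨F, hF, hx, rfl⟩
  · rintro ⟨F, hF, hx, rfl⟩; exact ⟨F, ⟨hF, hx⟩, rfl⟩

lemma lnk_subset_res (hdc : DC 𝓕) (k : Fin ℓ) : lnk 𝓕 x k ⊆ res 𝓕 x k := by
  intro G hG
  obtain ⟨F, hF, hx, rfl⟩ := lnk_mem.1 hG
  rw [res, mem_filter]
  exact ⟨hdc k F hF _ (erase_subset x F), notMem_erase x F⟩

lemma two_deg_le (hdc : DC 𝓕) (k : Fin ℓ) : 2 * deg 𝓕 x k ≤ (𝓕 k).card := by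
  have h := card_le_card (lnk_subset_res (x := x) hdc k)
  rw [card_lnk] at h
  have := card_res (𝓕 := 𝓕) (x := x) k
  omega

lemma singleton_mem (hdc : DC 𝓕) {k : Fin ℓ} (hdeg : 1 ≤ deg 𝓕 x k) : {x} ∈ 𝓕 k := by
  rw [deg, Nat.one_le_iff_ne_zero, ← Nat.pos_iff_ne_zero, Finset.card_pos] at hdeg
  obtain ⟨F, hF⟩ := hdeg
  rw [mem_filter] at hF
  exact hdc k F hF.1 {x} (singleton_subset_iff.2 hF.2)

lemma m_pos (hdc : DC 𝓕) (hov : MOverlap n ℓ m 𝓕) {k k' : Fin ℓ} (hne : k ≠ k')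
    (h1 : 1 ≤ deg 𝓕 x k) (h2 : 1 ≤ deg 𝓕 x k') : 1 ≤ m k k' := by
  have := hov k k' hne {x} (singleton_mem hdc h1) {x} (singleton_mem hdc h2)
  simpa using this

/-- reduce m by one at the unordered pair {i,j} -/
def red2 (m : Fin ℓ → Fin ℓ → ℕ) (i j : Fin ℓ) : Fin ℓ → Fin ℓ → ℕ :=
  fun a b => if (a = i ∧ b = j) ∨ (a = j ∧ b = i) then m a b - 1 else m a b

lemma red2_le (i j a b : Fin ℓ) : red2 m i j a b ≤ m a b := by
  rw [red2]; split_ifs <;> omega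

lemma red2_symm (hsym : ∀ a b, m a b = m b a) (i j : Fin ℓ) :
    ∀ a b, red2 m i j a b = red2 m i j b a := by
  intro a b
  rw [red2, red2]
  rcases Classical.em ((a = i ∧ b = j) ∨ (a = j ∧ b = i)) with h | h
  · rw [if_pos h, if_pos (by tauto), hsym]
  · rw [if_neg h, if_neg (by tauto), hsym]

lemma red2_eval {i j : Fin ℓ} (hne : i ≠ j) : red2 m i j i j = m i j - 1 := by
  rw [red2, if_pos (Or.inl ⟨rfl, rfl⟩)]

lemma red2_eval_other {i j a b : Fin ℓ} (h : ¬((a = i ∧ b = j) ∨ (a = j ∧ b = i))) :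
    red2 m i j a b = m a b := by rw [red2, if_neg h]

/-- the mixed collection: links on T, restrictions off T -/
noncomputable def mixed (𝓕 : Fin ℓ → Finset (Finset (Fin n))) (x : Fin n)
    (T : Finset (Fin ℓ)) : Fin ℓ → Finset (Finset (Fin n)) :=
  T.piecewise (lnk 𝓕 x) (res 𝓕 x)

lemma mixed_mem_cases {T : Finset (Fin ℓ)} {k : Fin ℓ} {G : Finset (Fin n)}
    (hG : G ∈ mixed 𝓕 x T k) :
    ∃ F ∈ 𝓕 k, G ⊆ F ∧ x ∉ G ∧ (k ∈ T → (x ∈ F ∧ G = F.erase x)) := by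
  classical
  by_cases hk : k ∈ T
  · rw [mixed, T.piecewise_eq_of_mem _ _ hk] at hG
    obtain ⟨F, hF, hx, rfl⟩ := lnk_mem.1 hG
    exact ⟨F, hF, erase_subset x F, notMem_erase x F, fun _ => ⟨hx, rfl⟩⟩
  · rw [mixed, T.piecewise_eq_of_notMem _ _ hk] at hG
    rw [res, mem_filter] at hG
    exact ⟨G, hG.1, Subset.rfl, hG.2, fun h => absurd h hk⟩

lemma mixed_overlap (hov : MOverlap n ℓ m 𝓕) {T : Finset (Fin ℓ)}
    {m' : Fin ℓ → Fin ℓ → ℕ}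
    (hm1 : ∀ k₁ k₂, k₁ ≠ k₂ → k₁ ∈ T → k₂ ∈ T → m k₁ k₂ ≤ m' k₁ k₂ + 1)
    (hm2 : ∀ k₁ k₂, k₁ ≠ k₂ → ¬(k₁ ∈ T ∧ k₂ ∈ T) → m k₁ k₂ ≤ m' k₁ k₂) :
    MOverlap n ℓ m' (mixed 𝓕 x T) := by
  intro k₁ k₂ hne G₁ h₁ G₂ h₂
  obtain ⟨F₁, hF₁, hs₁, hx₁, hT₁⟩ := mixed_mem_cases h₁
  obtain ⟨F₂, hF₂, hs₂, hx₂, hT₂⟩ := mixed_mem_cases h₂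
  have base := hov k₁ k₂ hne F₁ hF₁ F₂ hF₂
  by_cases hT : k₁ ∈ T ∧ k₂ ∈ T
  · obtain ⟨hxF₁, hG₁⟩ := hT₁ hT.1
    obtain ⟨hxF₂, hG₂⟩ := hT₂ hT.2
    have hGint : G₁ ∩ G₂ = (F₁ ∩ F₂).erase x := by
      rw [hG₁, hG₂]
      ext a
      simp only [mem_inter, mem_erase]
      tauto
    have hxint : x ∈ F₁ ∩ F₂ := mem_inter.2 ⟨hxF₁, hxF₂⟩
    rw [hGint, card_erase_of_mem hxint]
    have := hm1 k₁ k₂ hne hT.1 hT.2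
    omega
  · calc (G₁ ∩ G₂).card ≤ (F₁ ∩ F₂).card := card_le_card (inter_subset_inter hs₁ hs₂)
      _ ≤ m k₁ k₂ := base
      _ ≤ m' k₁ k₂ := hm2 k₁ k₂ hne hT

lemma mixed_supp {S : Finset (Fin n)} (hsupp : Supp S 𝓕) (T : Finset (Fin ℓ)) :
    Supp (S.erase x) (mixed 𝓕 x T) := by
  intro k G hG
  obtain ⟨F, hF, hs, hx, -⟩ := mixed_mem_cases hG
  intro a ha
  exact mem_erase.2 ⟨fun h => hx (h ▸ ha), hsupp k F hF (hs ha)⟩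

lemma pr_mixed (T : Finset (Fin ℓ)) :
    pr (mixed 𝓕 x T) = (∏ k ∈ T, deg 𝓕 x k) * ∏ k ∈ univ \ T, (res 𝓕 x k).card := by
  classical
  rw [pr]
  have h1 : ∀ k : Fin ℓ, ((mixed 𝓕 x T) k).card
      = T.piecewise (fun k => deg 𝓕 x k) (fun k => (res 𝓕 x k).card) k := by
    intro k
    by_cases hk : k ∈ T
    · rw [mixed, T.piecewise_eq_of_mem _ _ hk, T.piecewise_eq_of_mem _ _ hk, card_lnk]
    · rw [mixed, T.piecewise_eq_of_notMem _ _ hk, T.piecewise_eq_of_notMem _ _ hk]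
  rw [Finset.prod_congr rfl (fun k _ => h1 k), Finset.prod_piecewise, univ_inter]

/-- the basic expansion over subsets of indices -/
lemma expansion : pr 𝓕 = ∑ T ∈ (univ : Finset (Fin ℓ)).powerset,
    (∏ k ∈ T, deg 𝓕 x k) * ∏ k ∈ univ \ T, (res 𝓕 x k).card := by
  classical
  rw [pr]
  have h : ∀ k : Fin ℓ, (𝓕 k).card = deg 𝓕 x k + (res 𝓕 x k).card := by
    intro k; have := card_res (𝓕 := 𝓕) (x := x) k; omega
  rw [Finset.prod_congr rfl (fun k _ => h k), Finset.prod_add]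

/-- every element has a family with large degree, for maximizers -/
lemma exists_kstar (hl : 0 < ℓ) {S : Finset (Fin n)} {𝓕 : Fin ℓ → Finset (Finset (Fin n))}
    (hov : MOverlap n ℓ m 𝓕) (hsupp : Supp S 𝓕) (hmax : pr 𝓕 = SS n ℓ m S)
    {x : Fin n} (hx : x ∈ S) :
    ∃ k : Fin ℓ, (𝓕 k).card ≤ 4 * ℓ * deg 𝓕 x k := by
  classical
  by_contra hcon
  push_neg at hcon
  -- the restricted collection
  have hres_ov : MOverlap n ℓ m (res 𝓕 x) :=
    MOverlap_of_subset (fun k => filter_subset _ _) hov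
  have hres_supp : Supp (S.erase x) (res 𝓕 x) := by
    intro k F hF
    rw [res, mem_filter] at hF
    exact fun a ha => mem_erase.2 ⟨fun h => hF.2 (h ▸ ha), hsupp k F hF.1 ha⟩
  have h2 : 2 * pr (res 𝓕 x) ≤ pr 𝓕 := by
    calc 2 * pr (res 𝓕 x) ≤ 2 * SS n ℓ m (S.erase x) :=
          Nat.mul_le_mul_left 2 (le_SS hres_ov hres_supp)
      _ ≤ SS n ℓ m S := two_SS_erase_le hl hx
      _ = pr 𝓕 := hmax.symm
  -- real-number estimates
  have hpos : ∀ k, 0 < (𝓕 k).card := pos_of_max hl hmax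
  have key : ∀ k : Fin ℓ, ((𝓕 k).card : ℝ) * (1 - 1 / (4 * ℓ)) ≤ ((res 𝓕 x k).card : ℝ) := by
    intro k
    have h := hcon k
    have hcr := card_res (𝓕 := 𝓕) (x := x) k
    have hlpos : (0:ℝ) < 4 * ℓ := by positivity
    rw [mul_one_sub]
    have hd : ((𝓕 k).card : ℝ) / (4 * ℓ) ≥ (deg 𝓕 x k : ℝ) := by
      rw [ge_iff_le, le_div_iff₀ hlpos]
      have : 4 * ℓ * deg 𝓕 x k < (𝓕 k).card := h
      calc (deg 𝓕 x k : ℝ) * (4 * ℓ) = ((4 * ℓ * deg 𝓕 x k : ℕ) : ℝ) := by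
            push_cast; ring
        _ ≤ ((𝓕 k).card : ℝ) := by exact_mod_cast this.le
    have : ((res 𝓕 x k).card : ℝ) = ((𝓕 k).card : ℝ) - (deg 𝓕 x k : ℝ) := by
      have : ((res 𝓕 x k).card : ℝ) + (deg 𝓕 x k : ℝ) = ((𝓕 k).card : ℝ) := by
        exact_mod_cast congrArg (Nat.cast : ℕ → ℝ) hcr
      linarith
    rw [this]
    have : ((𝓕 k).card : ℝ) * (1 / (4 * ℓ)) = ((𝓕 k).card : ℝ) / (4 * ℓ) := by ring
    linarith [hd]
  have hprodle : ((pr 𝓕 : ℝ)) * (3 / 4) ≤ (pr (res 𝓕 x) : ℝ) := by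
    have hbern : (3 / 4 : ℝ) ≤ (1 - 1 / (4 * ℓ)) ^ ℓ := by
      have h1 : (-2 : ℝ) ≤ -(1 / (4 * ℓ)) := by
        have : (0:ℝ) < 4 * ℓ := by positivity
        have h4 : (1:ℝ) / (4 * ℓ) ≤ 1 := by
          rw [div_le_one this]
          have : (1:ℝ) ≤ ℓ := by exact_mod_cast hl
          linarith
        linarith
      have := one_add_mul_le_pow h1 ℓ
      have heq : 1 + (ℓ : ℝ) * (-(1 / (4 * ℓ))) = 3 / 4 := by
        have hl0 : (ℓ : ℝ) ≠ 0 := by positivity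
        field_simp
        ring
      rw [heq] at this
      rwa [← sub_eq_add_neg] at this
    calc ((pr 𝓕 : ℝ)) * (3 / 4) ≤ ((pr 𝓕 : ℝ)) * (1 - 1 / (4 * ℓ)) ^ ℓ := by
          apply mul_le_mul_of_nonneg_left hbern (by positivity)
      _ = ∏ k : Fin ℓ, (((𝓕 k).card : ℝ) * (1 - 1 / (4 * ℓ))) := by
          rw [pr]
          push_cast
          rw [Finset.prod_mul_distrib]
          congr 1
          simp [Finset.card_univ]
      _ ≤ ∏ k : Fin ℓ, ((res 𝓕 x k).card : ℝ) := by
          apply Finset.prod_le_prod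
          · intro k _
            have h4 : (0:ℝ) < 4 * ℓ := by positivity
            have : (1:ℝ) / (4 * ℓ) ≤ 1 := by
              rw [div_le_one h4]
              have : (1:ℝ) ≤ ℓ := by exact_mod_cast hl
              linarith
            have := hpos k
            have h0 : (0:ℝ) ≤ ((𝓕 k).card : ℝ) := by positivity
            nlinarith
          · intro k _
            exact key k
      _ = (pr (res 𝓕 x) : ℝ) := by rw [pr]; push_cast; rfl
  have hfin : (pr 𝓕 : ℝ) ≤ 0 := by
    have h2' : 2 * (pr (res 𝓕 x) : ℝ) ≤ (pr 𝓕 : ℝ) := by exact_mod_cast h2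
    linarith
  have : 0 < pr 𝓕 := by
    rw [hmax]; exact lt_of_lt_of_le Nat.zero_lt_one (one_le_SS hl S)
  have : (0:ℝ) < (pr 𝓕 : ℝ) := by exact_mod_cast this
  linarith

lemma term_le_SS {S : Finset (Fin n)} (hov : MOverlap n ℓ m 𝓕) (hsupp : Supp S 𝓕)
    (T : Finset (Fin ℓ)) :
    pr (mixed 𝓕 x T) ≤ SS n ℓ m (S.erase x) := by
  apply le_SS
  · apply mixed_overlap hov
    · intro k₁ k₂ _ _ _; omega
    · intro k₁ k₂ _ _; exact le_rfl
  · exact mixed_supp hsupp T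

lemma term_le_red {S : Finset (Fin n)} (hov : MOverlap n ℓ m 𝓕) (hsupp : Supp S 𝓕)
    {T : Finset (Fin ℓ)} {i j : Fin ℓ} (hij : i ≠ j) (hi : i ∈ T) (hj : j ∈ T) :
    pr (mixed 𝓕 x T) ≤ SS n ℓ (red2 m i j) (S.erase x) := by
  apply le_SS
  · apply mixed_overlap hov
    · intro k₁ k₂ _ _ _
      have := red2_le (m := m) i j k₁ k₂
      rw [red2]
      split_ifs <;> omega
    · intro k₁ k₂ hne hT
      rw [red2_eval_other]
      intro hc
      apply hT
      rcases hc with ⟨h1, h2⟩ | ⟨h1, h2⟩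
      · exact ⟨by rw [h1]; exact hi, by rw [h2]; exact hj⟩
      · exact ⟨by rw [h1]; exact hj, by rw [h2]; exact hi⟩
  · exact mixed_supp hsupp T

/-- main recursion -/
lemma SS_recursion (hl : 0 < ℓ) {S : Finset (Fin n)} {x : Fin n} (hx : x ∈ S) {B : ℕ}
    (hB : ∀ i j : Fin ℓ, i ≠ j → 1 ≤ m i j → SS n ℓ (red2 m i j) (S.erase x) ≤ B) :
    SS n ℓ m S ≤ 2 * SS n ℓ m (S.erase x) + 2 ^ ℓ * (4 * ℓ * B) := by
  classical
  obtain ⟨𝓕, hov, hsupp, hmax⟩ := exists_max (m := m) hl S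
  have hdc : DC 𝓕 := max_DC hl hov hsupp hmax
  obtain ⟨ks, hks⟩ := exists_kstar hl hov hsupp hmax hx
  have hposk : ∀ k, 0 < (𝓕 k).card := pos_of_max hl hmax
  have hdegks : 1 ≤ deg 𝓕 x ks := by
    by_contra h
    push_neg at h
    have h0 : deg 𝓕 x ks = 0 := by omega
    rw [h0, Nat.mul_zero] at hks
    have := hposk ks
    omega
  -- the term function
  set f : Finset (Fin ℓ) → ℕ :=
    fun T => (∏ k ∈ T, deg 𝓕 x k) * ∏ k ∈ univ \ T, (res 𝓕 x k).card with hf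
  have hterm : ∀ T, f T = pr (mixed 𝓕 x T) := fun T => (pr_mixed T).symm
  have hexp : pr 𝓕 = ∑ T ∈ (univ : Finset (Fin ℓ)).powerset, f T := expansion
  -- split off ∅ and {ks}
  have hmem1 : (∅ : Finset (Fin ℓ)) ∈ (univ : Finset (Fin ℓ)).powerset :=
    mem_powerset.2 (empty_subset _)
  have hmem2 : ({ks} : Finset (Fin ℓ)) ∈ ((univ : Finset (Fin ℓ)).powerset).erase ∅ :=
    mem_erase.2 ⟨singleton_ne_empty ks, mem_powerset.2 (subset_univ _)⟩
  have hsplit : ∑ T ∈ (univ : Finset (Fin ℓ)).powerset, f T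
      = f ∅ + (f {ks} + ∑ T ∈ (((univ : Finset (Fin ℓ)).powerset).erase ∅).erase {ks}, f T) := by
    rw [Finset.add_sum_erase _ f hmem2, Finset.add_sum_erase _ f hmem1]
  -- bound the two main terms
  have hmain1 : f ∅ ≤ SS n ℓ m (S.erase x) := by
    rw [hterm]; exact term_le_SS hov hsupp ∅
  have hmain2 : f {ks} ≤ SS n ℓ m (S.erase x) := by
    rw [hterm]; exact term_le_SS hov hsupp {ks}
  -- bound the rest
  have hrest : ∀ T ∈ (((univ : Finset (Fin ℓ)).powerset).erase ∅).erase {ks}, f T ≤ 4 * ℓ * B := by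
    intro T hT
    have hTne1 : T ≠ {ks} := (mem_erase.1 hT).1
    have hTne0 : T ≠ ∅ := (mem_erase.1 (mem_erase.1 hT).2).1
    by_cases hdeg0 : ∃ k ∈ T, deg 𝓕 x k = 0
    · obtain ⟨k, hk, hdk⟩ := hdeg0
      have : ∏ k ∈ T, deg 𝓕 x k = 0 := Finset.prod_eq_zero hk hdk
      rw [hf]; simp only [this, zero_mul]; exact Nat.zero_le _
    · push_neg at hdeg0
      have hdegpos : ∀ k ∈ T, 1 ≤ deg 𝓕 x k := fun k hk => by have := hdeg0 k hk; omega
      rcases Finset.eq_empty_or_nonempty T with rfl | hTne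
      · exact absurd rfl hTne0
      by_cases hcard : T.card = 1
      · -- T = {k} with k ≠ ks
        obtain ⟨k, rfl⟩ := Finset.card_eq_one.1 hcard
        have hkks : k ≠ ks := fun h => hTne1 (by rw [h])
        have hdk : 1 ≤ deg 𝓕 x k := hdegpos k (mem_singleton_self k)
        have hm1 : 1 ≤ m k ks := m_pos hdc hov hkks hdk hdegks
        -- f {k} = deg k * res ks * (rest) ≤ 4ℓ deg k deg ks * rest = 4ℓ f {k, ks}
        have hkmem : ks ∈ univ \ ({k} : Finset (Fin ℓ)) := by
          rw [mem_sdiff]; exact ⟨mem_univ ks, by simp [hkks.symm]⟩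
        have e1 : ∏ j ∈ univ \ ({k} : Finset (Fin ℓ)), (res 𝓕 x j).card
            = (res 𝓕 x ks).card * ∏ j ∈ (univ \ ({k} : Finset (Fin ℓ))).erase ks, (res 𝓕 x j).card :=
          (Finset.mul_prod_erase _ _ hkmem).symm
        have e2 : (univ \ ({k} : Finset (Fin ℓ))).erase ks = univ \ ({k, ks} : Finset (Fin ℓ)) := by
          ext a
          simp only [mem_erase, mem_sdiff, mem_univ, mem_singleton, mem_insert, true_and]
          tauto
        have e3 : ∏ j ∈ ({k, ks} : Finset (Fin ℓ)), deg 𝓕 x j = deg 𝓕 x k * deg 𝓕 x ks := by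
          rw [Finset.prod_insert (by simp [hkks]), Finset.prod_singleton]
        have hres_le : (res 𝓕 x ks).card ≤ 4 * ℓ * deg 𝓕 x ks := by
          have h1 : (res 𝓕 x ks).card ≤ (𝓕 ks).card := card_le_card (filter_subset _ _)
          omega
        calc f {k} = deg 𝓕 x k * ((res 𝓕 x ks).card *
              ∏ j ∈ univ \ ({k, ks} : Finset (Fin ℓ)), (res 𝓕 x j).card) := by
              rw [hf]; simp only [Finset.prod_singleton]; rw [e1, e2]
          _ ≤ deg 𝓕 x k * ((4 * ℓ * deg 𝓕 x ks) *
              ∏ j ∈ univ \ ({k, ks} : Finset (Fin ℓ)), (res 𝓕 x j).card) := by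
              apply Nat.mul_le_mul_left
              exact Nat.mul_le_mul_right _ hres_le
          _ = 4 * ℓ * f {k, ks} := by rw [hf]; simp only [e3]; ring
          _ ≤ 4 * ℓ * B := by
              apply Nat.mul_le_mul_left
              rw [hterm]
              exact le_trans (term_le_red hov hsupp hkks (by simp) (by simp)) (hB k ks hkks hm1)
      · -- |T| ≥ 2
        have h2card : 2 ≤ T.card := by
          have := Finset.card_pos.2 hTne
          omega
        obtain ⟨i, hi, j, hj, hij⟩ := Finset.one_lt_card.1 h2card
        have hmij : 1 ≤ m i j := m_pos hdc hov hij (hdegpos i hi) (hdegpos j hj)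
        calc f T = pr (mixed 𝓕 x T) := hterm T
          _ ≤ SS n ℓ (red2 m i j) (S.erase x) := term_le_red hov hsupp hij hi hj
          _ ≤ B := hB i j hij hmij
          _ ≤ 4 * ℓ * B := Nat.le_mul_of_pos_left B (by positivity)
  have hcount : ∑ T ∈ (((univ : Finset (Fin ℓ)).powerset).erase ∅).erase {ks}, f T
      ≤ 2 ^ ℓ * (4 * ℓ * B) := by
    calc ∑ T ∈ (((univ : Finset (Fin ℓ)).powerset).erase ∅).erase {ks}, f T
        ≤ (((((univ : Finset (Fin ℓ)).powerset).erase ∅).erase {ks}).card) * (4 * ℓ * B) := by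
          rw [← smul_eq_mul]
          exact Finset.sum_le_card_nsmul _ _ _ hrest
      _ ≤ 2 ^ ℓ * (4 * ℓ * B) := by
          apply Nat.mul_le_mul_right
          calc ((((univ : Finset (Fin ℓ)).powerset).erase ∅).erase {ks}).card
              ≤ (((univ : Finset (Fin ℓ)).powerset)).card := by
                apply card_le_card
                exact (erase_subset _ _).trans (erase_subset _ _)
            _ = 2 ^ ℓ := by rw [card_powerset, card_univ, Fintype.card_fin]
  calc SS n ℓ m S = pr 𝓕 := hmax.symm
    _ = f ∅ + (f {ks} + ∑ T ∈ (((univ : Finset (Fin ℓ)).powerset).erase ∅).erase {ks}, f T) := by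
        rw [hexp, hsplit]
    _ ≤ SS n ℓ m (S.erase x) + (SS n ℓ m (S.erase x) + 2 ^ ℓ * (4 * ℓ * B)) :=
        Nat.add_le_add hmain1 (Nat.add_le_add hmain2 hcount)
    _ = 2 * SS n ℓ m (S.erase x) + 2 ^ ℓ * (4 * ℓ * B) := by ring

/-- total overlap budget -/
def EE (m : Fin ℓ → Fin ℓ → ℕ) : ℕ := ∑ p ∈ pairsOf (univ : Finset (Fin ℓ)), m p.1 p.2

lemma mem_pairsOf {p : Fin ℓ × Fin ℓ} : p ∈ pairsOf (univ : Finset (Fin ℓ)) ↔ p.1 < p.2 := by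
  rw [pairsOf, mem_filter, mem_offDiag]
  constructor
  · exact fun h => h.2
  · exact fun h => ⟨⟨mem_univ _, mem_univ _, ne_of_lt h⟩, h⟩

lemma EE_red2 (hsym : ∀ a b, m a b = m b a) {i j : Fin ℓ} (hij : i ≠ j) (hm : 1 ≤ m i j) :
    EE (red2 m i j) + 1 = EE m := by
  classical
  rcases lt_or_gt_of_ne hij with hlt | hgt
  all_goals {
    first
    | (set p₀ : Fin ℓ × Fin ℓ := (i, j) with hp₀
       have hmem : p₀ ∈ pairsOf (univ : Finset (Fin ℓ)) := mem_pairsOf.2 hlt)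
    | (set p₀ : Fin ℓ × Fin ℓ := (j, i) with hp₀
       have hmem : p₀ ∈ pairsOf (univ : Finset (Fin ℓ)) := mem_pairsOf.2 hgt)
    have hval : red2 m i j p₀.1 p₀.2 + 1 = m p₀.1 p₀.2 := by
      rw [hp₀, red2]
      simp only []
      rw [if_pos (by tauto)]
      have : m j i = m i j := hsym j i
      omega
    have hother : ∀ q ∈ (pairsOf (univ : Finset (Fin ℓ))).erase p₀,
        red2 m i j q.1 q.2 = m q.1 q.2 := by
      intro q hq
      obtain ⟨hqne, hqmem⟩ := mem_erase.1 hq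
      have hqlt : q.1 < q.2 := mem_pairsOf.1 hqmem
      apply red2_eval_other
      rintro (⟨h1, h2⟩ | ⟨h1, h2⟩)
      · apply hqne
        rw [hp₀, Prod.ext_iff]
        first
        | exact ⟨h1, h2⟩
        | (exfalso; rw [h1, h2] at hqlt; exact absurd hqlt (not_lt.2 hgt.le))
      · apply hqne
        rw [hp₀, Prod.ext_iff]
        first
        | exact ⟨h1, h2⟩
        | (exfalso; rw [h1, h2] at hqlt; exact absurd hqlt (not_lt.2 hlt.le))
    rw [EE, EE, ← Finset.add_sum_erase _ _ hmem, ← Finset.add_sum_erase _ _ hmem,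
      Finset.sum_congr rfl hother]
    omega
  }

lemma EE_zero (hsym : ∀ a b, m a b = m b a) (hE : EE m = 0) :
    ∀ i j : Fin ℓ, i ≠ j → m i j = 0 := by
  intro i j hij
  rw [EE, Finset.sum_eq_zero_iff] at hE
  rcases lt_or_gt_of_ne hij with hlt | hgt
  · exact hE (i, j) (mem_pairsOf.2 hlt)
  · rw [hsym]; exact hE (j, i) (mem_pairsOf.2 hgt)

lemma EE_pos (hE : 1 ≤ EE m) : ∃ i j : Fin ℓ, i ≠ j ∧ 1 ≤ m i j := by
  by_contra h
  push_neg at h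
  have : EE m = 0 := by
    rw [EE]
    apply Finset.sum_eq_zero
    intro p hp
    have hlt := mem_pairsOf.1 hp
    have := h p.1 p.2 (ne_of_lt hlt)
    omega
  omega

lemma SS_empty (hl : 0 < ℓ) : SS n ℓ m (∅ : Finset (Fin n)) ≤ 1 := by
  obtain ⟨𝓕, hov, hsupp, hmax⟩ := exists_max (m := m) hl ∅
  rw [← hmax, pr]
  apply Finset.prod_le_one
  · intro k _; exact Nat.zero_le _
  · intro k _
    apply Finset.card_le_one.2
    intro F hF G hG
    have h1 : F = ∅ := subset_empty.1 (hsupp k F hF)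
    have h2 : G = ∅ := subset_empty.1 (hsupp k G hG)
    rw [h1, h2]

/-- upper bound: SS ≤ A(e) · 2^|S| · (|S|+1)^e -/
lemma SS_upper (hl : 0 < ℓ) :
    ∀ e : ℕ, ∀ m : Fin ℓ → Fin ℓ → ℕ, (∀ a b, m a b = m b a) → EE m = e →
    ∀ S : Finset (Fin n),
      SS n ℓ m S ≤ (2 ^ ℓ * (4 * ℓ) + 2) ^ (e + 1) * 2 ^ S.card * (S.card + 1) ^ e := by
  intro e
  induction e using Nat.strong_induction_on with
  | _ e ihe =>
    intro m hsym hE S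
    induction S using Finset.strongInduction with
    | _ S ihS =>
      set D : ℕ := 2 ^ ℓ * (4 * ℓ) with hD
      rcases Finset.eq_empty_or_nonempty S with rfl | ⟨x, hx⟩
      · have h1 : 0 < (D + 2) ^ (e + 1) * 2 ^ (∅ : Finset (Fin n)).card
            * ((∅ : Finset (Fin n)).card + 1) ^ e := by positivity
        have h2 := SS_empty (m := m) (n := n) hl
        omega
      · have hcard : (S.erase x).card = S.card - 1 := card_erase_of_mem hx
        have hSpos : 1 ≤ S.card := card_pos.2 ⟨x, hx⟩
        have hs1 : S.card - 1 + 1 = S.card := by omega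
        have hinner := ihS (S.erase x) (erase_ssubset hx)
        rw [hcard, hs1] at hinner
        have h2p : 2 * 2 ^ (S.card - 1) = 2 ^ S.card := by
          rw [← pow_succ', hs1]
        rcases Nat.eq_zero_or_pos e with rfl | hepos
        · -- e = 0 : no reducible pairs
          have hB : ∀ i j : Fin ℓ, i ≠ j → 1 ≤ m i j →
              SS n ℓ (red2 m i j) (S.erase x) ≤ 0 := by
            intro i j hij hm
            have := EE_zero hsym hE i j hij
            omega
          have hrec := SS_recursion (m := m) hl hx hB
          rw [Nat.mul_zero, Nat.mul_zero, Nat.add_zero] at hrec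
          simp only [pow_zero, mul_one] at hinner ⊢
          calc SS n ℓ m S ≤ 2 * SS n ℓ m (S.erase x) := hrec
            _ ≤ 2 * ((D + 2) ^ (0 + 1) * 2 ^ (S.card - 1)) := Nat.mul_le_mul_left 2 hinner
            _ = (D + 2) ^ (0 + 1) * 2 ^ S.card := by rw [← h2p]; ring
        · -- e ≥ 1
          obtain ⟨q, rfl⟩ : ∃ q, e = q + 1 := ⟨e - 1, by omega⟩
          set B : ℕ := (D + 2) ^ (q + 1) * 2 ^ (S.card - 1) * S.card ^ q with hB'
          have hB : ∀ i j : Fin ℓ, i ≠ j → 1 ≤ m i j →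
              SS n ℓ (red2 m i j) (S.erase x) ≤ B := by
            intro i j hij hm
            have hEr : EE (red2 m i j) = q := by
              have := EE_red2 hsym hij hm
              omega
            have h := ihe q (by omega) (red2 m i j) (red2_symm hsym i j) hEr (S.erase x)
            rw [hcard, hs1] at h
            exact h
          have hrec := SS_recursion (m := m) hl hx hB
          -- final arithmetic
          have e1 : 2 * ((D + 2) ^ (q + 1 + 1) * 2 ^ (S.card - 1) * S.card ^ (q + 1))
              = (D + 2) ^ (q + 1 + 1) * 2 ^ S.card * S.card ^ (q + 1) := by
            rw [← h2p]; ring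
          have e2 : D * B ≤ (D + 2) ^ (q + 1 + 1) * 2 ^ S.card * S.card ^ q := by
            rw [hB', ← h2p]
            calc D * ((D + 2) ^ (q + 1) * 2 ^ (S.card - 1) * S.card ^ q)
                = (D + 2) ^ (q + 1) * 2 ^ (S.card - 1) * S.card ^ q * D := by ring
              _ ≤ (D + 2) ^ (q + 1) * 2 ^ (S.card - 1) * S.card ^ q * (2 * (D + 2)) :=
                  Nat.mul_le_mul_left _ (by omega)
              _ = (D + 2) ^ (q + 1 + 1) * (2 * 2 ^ (S.card - 1)) * S.card ^ q := by ring
          have e3 : S.card ^ (q + 1) + S.card ^ q ≤ (S.card + 1) ^ (q + 1) := by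
            calc S.card ^ (q + 1) + S.card ^ q = (S.card + 1) * S.card ^ q := by ring
              _ ≤ (S.card + 1) * (S.card + 1) ^ q :=
                  Nat.mul_le_mul_left _ (Nat.pow_le_pow_left (by omega) _)
              _ = (S.card + 1) ^ (q + 1) := by ring
          calc SS n ℓ m S ≤ 2 * SS n ℓ m (S.erase x) + D * B := by
                have hDB : 2 ^ ℓ * (4 * ℓ * B) = D * B := by rw [hD]; ring
                rw [← hDB]; exact hrec
            _ ≤ 2 * ((D + 2) ^ (q + 1 + 1) * 2 ^ (S.card - 1) * S.card ^ (q + 1)) + D * B :=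
                Nat.add_le_add_right (Nat.mul_le_mul_left 2 hinner) _
            _ ≤ (D + 2) ^ (q + 1 + 1) * 2 ^ S.card * S.card ^ (q + 1)
                + (D + 2) ^ (q + 1 + 1) * 2 ^ S.card * S.card ^ q := by
                rw [e1]; exact Nat.add_le_add_left e2 _
            _ = (D + 2) ^ (q + 1 + 1) * 2 ^ S.card * (S.card ^ (q + 1) + S.card ^ q) := by ring
            _ ≤ (D + 2) ^ (q + 1 + 1) * 2 ^ S.card * (S.card + 1) ^ (q + 1) :=
                Nat.mul_le_mul_left _ e3

lemma card_union_image {𝓖k W : Finset (Finset (Fin n))} {Z : Finset (Fin n)}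
    (h1 : ∀ G ∈ 𝓖k, Disjoint G Z) (h2 : ∀ A ∈ W, A ⊆ Z) :
    ((𝓖k ×ˢ W).image (fun pq => pq.1 ∪ pq.2)).card = 𝓖k.card * W.card := by
  classical
  rw [card_image_of_injOn, card_product]
  rintro ⟨G, A⟩ hGA ⟨G', A'⟩ hGA' he
  simp only [mem_coe, mem_product] at hGA hGA'
  simp only at he
  have recover : ∀ (G₀ A₀ : Finset (Fin n)), Disjoint G₀ Z → A₀ ⊆ Z →
      (G₀ ∪ A₀) \ Z = G₀ ∧ (G₀ ∪ A₀) ∩ Z = A₀ := by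
    intro G₀ A₀ hd hA
    constructor
    · rw [union_sdiff_distrib, sdiff_eq_self_of_disjoint hd,
        sdiff_eq_empty_iff_subset.2 hA, union_empty]
    · rw [union_inter_distrib_right, (inter_eq_left.2 hA)]
      rw [Finset.disjoint_left] at hd
      have : G₀ ∩ Z = ∅ := by
        rw [eq_empty_iff_forall_notMem]
        intro a ha
        rw [mem_inter] at ha
        exact hd ha.1 ha.2
      rw [this, empty_union]
  obtain ⟨r1, r2⟩ := recover G A (h1 G hGA.1) (h2 A hGA.2)
  obtain ⟨r1', r2'⟩ := recover G' A' (h1 G' hGA'.1) (h2 A' hGA'.2)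
  have hG : G = G' := by rw [← r1, ← r1', he]
  have hA : A = A' := by rw [← r2, ← r2', he]
  rw [Prod.ext_iff]
  exact ⟨hG, hA⟩

/-- lower bound: SS ≥ (z+1)^e · 2^|S| whenever e·z ≤ |S| -/
lemma SS_lower (hl : 0 < ℓ) :
    ∀ e : ℕ, ∀ m : Fin ℓ → Fin ℓ → ℕ, (∀ a b, m a b = m b a) → EE m = e →
    ∀ S : Finset (Fin n), ∀ z : ℕ, e * z ≤ S.card →
      (z + 1) ^ e * 2 ^ S.card ≤ SS n ℓ m S := by
  intro e
  induction e with
  | zero =>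
    intro m hsym hE S z hz
    simpa using two_pow_le_SS (m := m) hl S
  | succ q ih =>
    intro m hsym hE S z hz
    classical
    obtain ⟨i, j, hij, hmij⟩ := EE_pos (m := m) (by omega)
    have hzS : z ≤ S.card := le_trans (Nat.le_mul_of_pos_left z (by omega)) hz
    obtain ⟨Z, hZS, hZcard⟩ := Finset.exists_subset_card_eq hzS
    set S' : Finset (Fin n) := S \ Z with hS'
    have hS'card : S'.card = S.card - z := by rw [hS', card_sdiff_of_subset hZS, hZcard]
    have hE' : EE (red2 m i j) = q := by have := EE_red2 hsym hij hmij; omega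
    have hz' : q * z ≤ S'.card := by
      rw [hS'card]
      have : (q + 1) * z = q * z + z := by ring
      omega
    have hIH := ih (red2 m i j) (red2_symm hsym i j) hE' S' z hz'
    obtain ⟨𝓖, hov', hsupp', hpr'⟩ := exists_max (m := red2 m i j) hl S'
    -- disjointness of 𝓖-sets from Z
    have hGdisj : ∀ k, ∀ G ∈ 𝓖 k, Disjoint G Z := by
      intro k G hG
      rw [Finset.disjoint_left]
      intro a ha haZ
      have := hsupp' k G hG ha
      rw [hS', mem_sdiff] at this
      exact this.2 haZ
    -- the small collection: subsets of Z of size ≤ 1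
    set small : Finset (Finset (Fin n)) := insert ∅ (Z.powersetCard 1) with hsmall
    have hsmall_mem : ∀ A ∈ small, A ⊆ Z ∧ A.card ≤ 1 := by
      intro A hA
      rw [hsmall, mem_insert] at hA
      rcases hA with rfl | hA
      · exact ⟨empty_subset Z, by simp⟩
      · rw [mem_powersetCard] at hA
        exact ⟨hA.1, hA.2.le⟩
    have hsmall_card : small.card = z + 1 := by
      rw [hsmall, card_insert_of_notMem, card_powersetCard, Nat.choose_one_right, hZcard]
      intro hmem
      rw [mem_powersetCard] at hmem
      simp at hmem
    -- the new collection
    set 𝓗 : Fin ℓ → Finset (Finset (Fin n)) :=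
      fun k => if k = i then ((𝓖 i) ×ˢ small).image (fun pq => pq.1 ∪ pq.2)
        else if k = j then ((𝓖 j) ×ˢ Z.powerset).image (fun pq => pq.1 ∪ pq.2)
        else 𝓖 k with h𝓗
    have h𝓗i : 𝓗 i = ((𝓖 i) ×ˢ small).image (fun pq => pq.1 ∪ pq.2) := by
      simp only [h𝓗]
      simp
    have h𝓗j : 𝓗 j = ((𝓖 j) ×ˢ Z.powerset).image (fun pq => pq.1 ∪ pq.2) := by
      simp only [h𝓗]
      simp [hij.symm]
    have h𝓗o : ∀ k, k ≠ i → k ≠ j → 𝓗 k = 𝓖 k := by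
      intro k hki hkj
      simp only [h𝓗]
      simp [hki, hkj]
    -- decomposition of members
    have hdecomp : ∀ k, ∀ F ∈ 𝓗 k, ∃ G B, G ∈ 𝓖 k ∧ B ⊆ Z ∧ F = G ∪ B ∧
        (k ≠ i ∧ k ≠ j → B = ∅) ∧ (k = i → B.card ≤ 1) := by
      intro k F hF
      by_cases hki : k = i
      · subst hki
        rw [h𝓗i, mem_image] at hF
        obtain ⟨⟨G, A⟩, hGA, rfl⟩ := hF
        rw [mem_product] at hGA
        exact ⟨G, A, hGA.1, (hsmall_mem A hGA.2).1, rfl,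
          fun h => absurd rfl h.1, fun _ => (hsmall_mem A hGA.2).2⟩
      · by_cases hkj : k = j
        · subst hkj
          rw [h𝓗j, mem_image] at hF
          obtain ⟨⟨G, A⟩, hGA, rfl⟩ := hF
          rw [mem_product] at hGA
          exact ⟨G, A, hGA.1, mem_powerset.1 hGA.2, rfl,
            fun h => absurd rfl h.2, fun h => absurd h hki⟩
        · rw [h𝓗o k hki hkj] at hF
          exact ⟨F, ∅, hF, empty_subset Z, (union_empty F).symm,
            fun _ => rfl, fun h => absurd h hki⟩
    -- overlap property
    have hovH : MOverlap n ℓ m 𝓗 := by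
      intro k₁ k₂ hne F₁ h₁ F₂ h₂
      obtain ⟨G₁, B₁, hG₁, hB₁Z, rfl, hB₁e, hB₁i⟩ := hdecomp k₁ F₁ h₁
      obtain ⟨G₂, B₂, hG₂, hB₂Z, rfl, hB₂e, hB₂i⟩ := hdecomp k₂ F₂ h₂
      have hbase := hov' k₁ k₂ hne G₁ hG₁ G₂ hG₂
      have hsub : (G₁ ∪ B₁) ∩ (G₂ ∪ B₂) ⊆ (G₁ ∩ G₂) ∪ (B₁ ∩ B₂) := by
        intro a ha
        rw [mem_inter, mem_union, mem_union] at ha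
        rw [mem_union, mem_inter, mem_inter]
        by_cases haZ : a ∈ Z
        · have h1 : a ∉ G₁ := fun h => (Finset.disjoint_left.1 (hGdisj k₁ G₁ hG₁)) h haZ
          have h2 : a ∉ G₂ := fun h => (Finset.disjoint_left.1 (hGdisj k₂ G₂ hG₂)) h haZ
          right; exact ⟨ha.1.resolve_left h1, ha.2.resolve_left h2⟩
        · have h1 : a ∉ B₁ := fun h => haZ (hB₁Z h)
          have h2 : a ∉ B₂ := fun h => haZ (hB₂Z h)
          left; exact ⟨ha.1.resolve_right h1, ha.2.resolve_right h2⟩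
      have hcardle : ((G₁ ∪ B₁) ∩ (G₂ ∪ B₂)).card ≤ (G₁ ∩ G₂).card + (B₁ ∩ B₂).card :=
        le_trans (card_le_card hsub) (card_union_le _ _)
      by_cases hpair : (k₁ = i ∧ k₂ = j) ∨ (k₁ = j ∧ k₂ = i)
      · -- the distinguished pair
        have hred : red2 m i j k₁ k₂ = m k₁ k₂ - 1 := by
          rw [red2, if_pos hpair]
        have hm1 : 1 ≤ m k₁ k₂ := by
          rcases hpair with ⟨rfl, rfl⟩ | ⟨rfl, rfl⟩
          · exact hmij
          · rw [hsym]; exact hmij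
        have hBcard : (B₁ ∩ B₂).card ≤ 1 := by
          rcases hpair with ⟨rfl, rfl⟩ | ⟨rfl, rfl⟩
          · calc (B₁ ∩ B₂).card ≤ B₁.card := card_le_card (inter_subset_left)
              _ ≤ 1 := hB₁i rfl
          · calc (B₁ ∩ B₂).card ≤ B₂.card := card_le_card (inter_subset_right)
              _ ≤ 1 := hB₂i rfl
        rw [hred] at hbase
        omega
      · -- some side has empty B
        have h12 : (k₁ ≠ i ∧ k₁ ≠ j) ∨ (k₂ ≠ i ∧ k₂ ≠ j) := by
          by_cases hk1i : k₁ = i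
          · subst hk1i
            right
            constructor
            · exact fun h => hne h.symm
            · exact fun h => hpair (Or.inl ⟨rfl, h⟩)
          · by_cases hk1j : k₁ = j
            · subst hk1j
              right
              constructor
              · exact fun h => hpair (Or.inr ⟨rfl, h⟩)
              · exact fun h => hne h.symm
            · exact Or.inl ⟨hk1i, hk1j⟩
        have hBempty : B₁ ∩ B₂ = ∅ := by
          rcases h12 with h | h
          · rw [hB₁e h, empty_inter]
          · rw [hB₂e h, inter_empty]
        have hred : red2 m i j k₁ k₂ = m k₁ k₂ := by
          apply red2_eval_other
          exact hpair
        rw [hred] at hbase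
        rw [hBempty] at hcardle
        simp only [card_empty, add_zero] at hcardle
        exact le_trans hcardle hbase
    -- support property
    have hsuppH : Supp S 𝓗 := by
      intro k F hF
      obtain ⟨G, B, hG, hBZ, rfl, -, -⟩ := hdecomp k F hF
      apply union_subset
      · exact (hsupp' k G hG).trans (sdiff_subset)
      · exact hBZ.trans hZS
    -- cardinalities
    have hcard_i : (𝓗 i).card = (𝓖 i).card * (z + 1) := by
      rw [h𝓗i, card_union_image (hGdisj i) (fun A hA => (hsmall_mem A hA).1), hsmall_card]
    have hcard_j : (𝓗 j).card = (𝓖 j).card * 2 ^ z := by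
      rw [h𝓗j, card_union_image (hGdisj j) (fun A hA => mem_powerset.1 hA), card_powerset, hZcard]
    have hcard_o : ∀ k, k ≠ i → k ≠ j → (𝓗 k).card = (𝓖 k).card := by
      intro k hki hkj
      rw [h𝓗o k hki hkj]
    -- product
    have hprH : pr 𝓗 = (z + 1) * 2 ^ z * pr 𝓖 := by
      have hjmem : j ∈ (univ : Finset (Fin ℓ)).erase i := mem_erase.2 ⟨hij.symm, mem_univ j⟩
      have hsplit : ∀ 𝓚 : Fin ℓ → Finset (Finset (Fin n)), pr 𝓚 =
          (𝓚 i).card * ((𝓚 j).card * ∏ k ∈ ((univ : Finset (Fin ℓ)).erase i).erase j, (𝓚 k).card) := by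
        intro 𝓚
        rw [pr, ← Finset.mul_prod_erase _ _ (mem_univ i), ← Finset.mul_prod_erase _ _ hjmem]
      rw [hsplit 𝓗, hsplit 𝓖, hcard_i, hcard_j]
      have : ∏ k ∈ ((univ : Finset (Fin ℓ)).erase i).erase j, (𝓗 k).card
          = ∏ k ∈ ((univ : Finset (Fin ℓ)).erase i).erase j, (𝓖 k).card := by
        apply Finset.prod_congr rfl
        intro k hk
        have hkj : k ≠ j := (mem_erase.1 hk).1
        have hki : k ≠ i := (mem_erase.1 (mem_erase.1 hk).2).1
        exact hcard_o k hki hkj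
      rw [this]
      ring
    -- conclude
    calc (z + 1) ^ (q + 1) * 2 ^ S.card
        = (z + 1) * 2 ^ z * ((z + 1) ^ q * 2 ^ S'.card) := by
          rw [hS'card]
          have h2 : 2 ^ z * 2 ^ (S.card - z) = 2 ^ S.card := by
            rw [← pow_add]
            congr 1
            omega
          rw [← h2]
          ring
      _ ≤ (z + 1) * 2 ^ z * SS n ℓ (red2 m i j) S' := Nat.mul_le_mul_left _ hIH
      _ = (z + 1) * 2 ^ z * pr 𝓖 := by rw [hpr']
      _ = pr 𝓗 := hprH.symm
      _ ≤ SS n ℓ m S := le_SS hovH hsuppH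

lemma red2_eval_other' {i j a b : Fin ℓ} (h1 : ¬(a = i ∧ b = j)) (h2 : ¬(a = j ∧ b = i)) :
    red2 m i j a b = m a b := red2_eval_other (by tauto)

lemma red2_eval_pair {i j a b : Fin ℓ} (h : (a = i ∧ b = j) ∨ (a = j ∧ b = i)) :
    red2 m i j a b = m a b - 1 := by rw [red2, if_pos h]

lemma triple_bound (hl : 0 < ℓ) (hsym : ∀ a b, m a b = m b a)
    {S : Finset (Fin n)} {𝓕 : Fin ℓ → Finset (Finset (Fin n))}
    (hov : MOverlap n ℓ m 𝓕) (hdc : DC 𝓕) (hsupp : Supp S 𝓕)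
    {x : Fin n} {k₁ k₂ k₃ : Fin ℓ} (h12 : k₁ ≠ k₂) (h13 : k₁ ≠ k₃) (h23 : k₂ ≠ k₃)
    (hd1 : 1 ≤ deg 𝓕 x k₁) (hd2 : 1 ≤ deg 𝓕 x k₂) (hd3 : 1 ≤ deg 𝓕 x k₃) :
    ∃ m₃ : Fin ℓ → Fin ℓ → ℕ, (∀ a b, m₃ a b = m₃ b a) ∧ EE m₃ + 3 = EE m ∧
      deg 𝓕 x k₁ * deg 𝓕 x k₂ * deg 𝓕 x k₃ *
        ∏ k ∈ univ \ ({k₁, k₂, k₃} : Finset (Fin ℓ)), (𝓕 k).card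
      ≤ 2 ^ ℓ * SS n ℓ m₃ (S.erase x) := by
  classical
  have hm12 : 1 ≤ m k₁ k₂ := m_pos hdc hov h12 hd1 hd2
  have hm13 : 1 ≤ m k₁ k₃ := m_pos hdc hov h13 hd1 hd3
  have hm23 : 1 ≤ m k₂ k₃ := m_pos hdc hov h23 hd2 hd3
  set m₁ : Fin ℓ → Fin ℓ → ℕ := red2 m k₁ k₂ with hm₁
  set m₂ : Fin ℓ → Fin ℓ → ℕ := red2 m₁ k₁ k₃ with hm₂
  set m₃ : Fin ℓ → Fin ℓ → ℕ := red2 m₂ k₂ k₃ with hm₃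
  have hsym1 : ∀ a b, m₁ a b = m₁ b a := red2_symm hsym k₁ k₂
  have hsym2 : ∀ a b, m₂ a b = m₂ b a := red2_symm hsym1 k₁ k₃
  have hsym3 : ∀ a b, m₃ a b = m₃ b a := red2_symm hsym2 k₂ k₃
  -- EE computation
  have hE1 : EE m₁ + 1 = EE m := EE_red2 hsym h12 hm12
  have hv13 : m₁ k₁ k₃ = m k₁ k₃ :=
    red2_eval_other' (fun ⟨_, h⟩ => h23 h.symm) (fun ⟨h, _⟩ => h12 h)
  have hE2 : EE m₂ + 1 = EE m₁ := EE_red2 hsym1 h13 (by rw [hm₂] at *; omega)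
  have hv23 : m₂ k₂ k₃ = m k₂ k₃ := by
    have s1 : m₂ k₂ k₃ = m₁ k₂ k₃ :=
      red2_eval_other' (fun ⟨h, _⟩ => h12 h.symm) (fun ⟨h, _⟩ => h23 h)
    have s2 : m₁ k₂ k₃ = m k₂ k₃ :=
      red2_eval_other' (fun ⟨h, _⟩ => h12 h.symm) (fun ⟨_, h⟩ => h13 h.symm)
    rw [s1, s2]
  have hE3 : EE m₃ + 1 = EE m₂ := EE_red2 hsym2 h23 (by rw [hv23]; exact hm23)
  -- evaluations at the six ordered pairs within the triple
  have ev12 : m₃ k₁ k₂ = m k₁ k₂ - 1 := by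
    have s3 : m₃ k₁ k₂ = m₂ k₁ k₂ :=
      red2_eval_other' (fun ⟨h, _⟩ => h12 h) (fun ⟨h, _⟩ => h13 h)
    have s2 : m₂ k₁ k₂ = m₁ k₁ k₂ :=
      red2_eval_other' (fun ⟨_, h⟩ => h23 h) (fun ⟨h, _⟩ => h13 h)
    have s1 : m₁ k₁ k₂ = m k₁ k₂ - 1 := red2_eval_pair (Or.inl ⟨rfl, rfl⟩)
    rw [s3, s2, s1]
  have ev21 : m₃ k₂ k₁ = m k₂ k₁ - 1 := by
    have s3 : m₃ k₂ k₁ = m₂ k₂ k₁ :=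
      red2_eval_other' (fun ⟨_, h⟩ => h13 h) (fun ⟨h, _⟩ => h23 h)
    have s2 : m₂ k₂ k₁ = m₁ k₂ k₁ :=
      red2_eval_other' (fun ⟨h, _⟩ => h12 h.symm) (fun ⟨h, _⟩ => h23 h)
    have s1 : m₁ k₂ k₁ = m k₂ k₁ - 1 := red2_eval_pair (Or.inr ⟨rfl, rfl⟩)
    rw [s3, s2, s1]
  have ev13 : m₃ k₁ k₃ = m k₁ k₃ - 1 := by
    have s3 : m₃ k₁ k₃ = m₂ k₁ k₃ :=
      red2_eval_other' (fun ⟨h, _⟩ => h12 h) (fun ⟨h, _⟩ => h13 h)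
    have s2 : m₂ k₁ k₃ = m₁ k₁ k₃ - 1 := red2_eval_pair (Or.inl ⟨rfl, rfl⟩)
    rw [s3, s2, hv13]
  have ev31 : m₃ k₃ k₁ = m k₃ k₁ - 1 := by
    have s3 : m₃ k₃ k₁ = m₂ k₃ k₁ :=
      red2_eval_other' (fun ⟨h, _⟩ => h23 h.symm) (fun ⟨_, h⟩ => h12 h)
    have s2 : m₂ k₃ k₁ = m₁ k₃ k₁ - 1 := red2_eval_pair (Or.inr ⟨rfl, rfl⟩)
    have s1 : m₁ k₃ k₁ = m k₃ k₁ :=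
      red2_eval_other' (fun ⟨h, _⟩ => h13 h.symm) (fun ⟨h, _⟩ => h23 h.symm)
    rw [s3, s2, s1]
  have ev23 : m₃ k₂ k₃ = m k₂ k₃ - 1 := by
    have s3 : m₃ k₂ k₃ = m₂ k₂ k₃ - 1 := red2_eval_pair (Or.inl ⟨rfl, rfl⟩)
    rw [s3, hv23]
  have ev32 : m₃ k₃ k₂ = m k₃ k₂ - 1 := by
    have s3 : m₃ k₃ k₂ = m₂ k₃ k₂ - 1 := red2_eval_pair (Or.inr ⟨rfl, rfl⟩)
    have s2 : m₂ k₃ k₂ = m₁ k₃ k₂ :=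
      red2_eval_other' (fun ⟨h, _⟩ => h13 h.symm) (fun ⟨_, h⟩ => h12 h.symm)
    have s1 : m₁ k₃ k₂ = m k₃ k₂ :=
      red2_eval_other' (fun ⟨h, _⟩ => h13 h.symm) (fun ⟨h, _⟩ => h23 h.symm)
    rw [s3, s2, s1]
  set t : Finset (Fin ℓ) := {k₁, k₂, k₃} with ht
  have hmemt : ∀ a : Fin ℓ, a ∈ t ↔ a = k₁ ∨ a = k₂ ∨ a = k₃ := by
    intro a
    simp [ht]
  -- hm1 : within the triple
  have hm1 : ∀ a b : Fin ℓ, a ≠ b → a ∈ t → b ∈ t → m a b ≤ m₃ a b + 1 := by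
    intro a b hab ha hb
    rw [hmemt] at ha hb
    rcases ha with rfl | rfl | rfl <;> rcases hb with rfl | rfl | rfl
    · exact absurd rfl hab
    · rw [ev12]; omega
    · rw [ev13]; omega
    · rw [ev21]; omega
    · exact absurd rfl hab
    · rw [ev23]; omega
    · rw [ev31]; omega
    · rw [ev32]; omega
    · exact absurd rfl hab
  -- hm2 : outside the triple, m₃ = m
  have hm2 : ∀ a b : Fin ℓ, a ≠ b → ¬(a ∈ t ∧ b ∈ t) → m a b ≤ m₃ a b := by
    intro a b hab hT
    have hin : ∀ c : Fin ℓ, c = k₁ ∨ c = k₂ ∨ c = k₃ → c ∈ t := by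
      intro c h; rw [hmemt]; exact h
    have s3 : m₃ a b = m₂ a b :=
      red2_eval_other' (fun ⟨h1, h2⟩ => hT ⟨hin a (Or.inr (Or.inl h1)), hin b (Or.inr (Or.inr h2))⟩)
        (fun ⟨h1, h2⟩ => hT ⟨hin a (Or.inr (Or.inr h1)), hin b (Or.inr (Or.inl h2))⟩)
    have s2 : m₂ a b = m₁ a b :=
      red2_eval_other' (fun ⟨h1, h2⟩ => hT ⟨hin a (Or.inl h1), hin b (Or.inr (Or.inr h2))⟩)
        (fun ⟨h1, h2⟩ => hT ⟨hin a (Or.inr (Or.inr h1)), hin b (Or.inl h2)⟩)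
    have s1 : m₁ a b = m a b :=
      red2_eval_other' (fun ⟨h1, h2⟩ => hT ⟨hin a (Or.inl h1), hin b (Or.inr (Or.inl h2))⟩)
        (fun ⟨h1, h2⟩ => hT ⟨hin a (Or.inr (Or.inl h1)), hin b (Or.inl h2)⟩)
    rw [s3, s2, s1]
  -- overlap and support of the mixed collection
  have hovM : MOverlap n ℓ m₃ (mixed 𝓕 x t) := mixed_overlap hov hm1 hm2
  have hsuppM : Supp (S.erase x) (mixed 𝓕 x t) := mixed_supp hsupp t
  have hSS := le_SS hovM hsuppM
  rw [pr_mixed] at hSS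
  -- the product over t
  have hprod_t : ∏ k ∈ t, deg 𝓕 x k = deg 𝓕 x k₁ * deg 𝓕 x k₂ * deg 𝓕 x k₃ := by
    rw [ht, Finset.prod_insert (by simp [h12, h13]),
      Finset.prod_insert (by simp [h23]), Finset.prod_singleton, mul_assoc]
  -- bound ∏ a ≤ 2^ℓ ∏ res off the triple
  have hQ : ∏ k ∈ univ \ t, (𝓕 k).card ≤ 2 ^ ℓ * ∏ k ∈ univ \ t, (res 𝓕 x k).card := by
    have hpt : ∀ k ∈ univ \ t, (𝓕 k).card ≤ 2 * (res 𝓕 x k).card := by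
      intro k _
      have h1 := two_deg_le (x := x) hdc k
      have h2 := card_res (𝓕 := 𝓕) (x := x) k
      omega
    calc ∏ k ∈ univ \ t, (𝓕 k).card ≤ ∏ k ∈ univ \ t, (2 * (res 𝓕 x k).card) :=
          Finset.prod_le_prod (fun _ _ => Nat.zero_le _) hpt
      _ = 2 ^ (univ \ t).card * ∏ k ∈ univ \ t, (res 𝓕 x k).card := by
          rw [Finset.prod_mul_distrib, Finset.prod_const]
      _ ≤ 2 ^ ℓ * ∏ k ∈ univ \ t, (res 𝓕 x k).card := by
          apply Nat.mul_le_mul_right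
          apply Nat.pow_le_pow_right (by omega)
          calc (univ \ t).card ≤ (univ : Finset (Fin ℓ)).card := card_le_card (sdiff_subset)
            _ = ℓ := by rw [card_univ, Fintype.card_fin]
  refine ⟨m₃, hsym3, by omega, ?_⟩
  calc deg 𝓕 x k₁ * deg 𝓕 x k₂ * deg 𝓕 x k₃ * ∏ k ∈ univ \ t, (𝓕 k).card
      ≤ deg 𝓕 x k₁ * deg 𝓕 x k₂ * deg 𝓕 x k₃ *
        (2 ^ ℓ * ∏ k ∈ univ \ t, (res 𝓕 x k).card) := Nat.mul_le_mul_left _ hQ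
    _ = 2 ^ ℓ * ((∏ k ∈ t, deg 𝓕 x k) * ∏ k ∈ univ \ t, (res 𝓕 x k).card) := by
        rw [hprod_t]; ring
    _ ≤ 2 ^ ℓ * SS n ℓ m₃ (S.erase x) := Nat.mul_le_mul_left _ hSS

end S16

set_option maxHeartbeats 2000000
open S16 Finset

/-- Lemma (pruning): for fixed `ℓ ≥ 2` and a fixed symmetric vector `m`, there is a constant
`C > 0` such that for every `n ≥ 1` and every extremal collection `𝓕 1, …, 𝓕 ℓ` with the
`m`-overlapping property there exist subfamilies `𝓕' k ⊆ 𝓕 k` such that: (1) every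
`x ∈ [n]` appears in sets of at most two of the subfamilies; and (2) for every `k`,
`|𝓕' k| ≥ (1 − C/√n)·|𝓕 k|`. -/
theorem statement16 (ℓ : ℕ) (hℓ : 2 ≤ ℓ) (m : Fin ℓ → Fin ℓ → ℕ)
    (hsym : ∀ i j : Fin ℓ, m i j = m j i) :
    ∃ C : ℝ, 0 < C ∧ ∀ n : ℕ, 1 ≤ n →
      ∀ 𝓕 : Fin ℓ → Finset (Finset (Fin n)),
        MOverlap n ℓ m 𝓕 →
        (∏ k, (𝓕 k).card) = sStar n ℓ m →
        ∃ 𝓕' : Fin ℓ → Finset (Finset (Fin n)),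
          (∀ k, 𝓕' k ⊆ 𝓕 k) ∧
          (∀ x : Fin n,
            open Classical in
            (Finset.univ.filter (fun k : Fin ℓ => ∃ G ∈ 𝓕' k, x ∈ G)).card ≤ 2) ∧
          (∀ k, (1 - C / Real.sqrt n) * ((𝓕 k).card : ℝ) ≤ ((𝓕' k).card : ℝ)) := by

  classical
  have hl : 0 < ℓ := by omega
  set E : ℕ := EE m with hEdef
  set D : ℕ := 2 ^ ℓ * (4 * ℓ) with hDdef
  set A : ℕ := (D + 2) ^ (E + 1) with hAdef
  set KN : ℕ := 4 * ℓ * (2 ^ ℓ * (A * E ^ E)) with hKNdef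
  refine ⟨Real.sqrt KN + 1, by positivity, ?_⟩
  intro n hn 𝓕 hov hmax
  have hsupp : Supp univ 𝓕 := fun k F _ => subset_univ F
  have hmaxSS : pr 𝓕 = SS n ℓ m univ := by
    rw [SS_univ_eq]; exact hmax
  have hdc : DC 𝓕 := max_DC hl hov hsupp hmaxSS
  have hpos : ∀ k, 0 < (𝓕 k).card := pos_of_max hl hmaxSS
  by_cases hE0 : E = 0
  · -- trivial case : no two families can share an element at all
    refine ⟨𝓕, fun k => Finset.Subset.rfl, ?_, ?_⟩
    · intro x
      have hle1 : ((univ : Finset (Fin ℓ)).filter (fun k => ∃ G ∈ 𝓕 k, x ∈ G)).card ≤ 1 := by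
        apply Finset.card_le_one.2
        intro a ha b hb
        rw [mem_filter] at ha hb
        obtain ⟨-, G₁, hG₁, hx₁⟩ := ha
        obtain ⟨-, G₂, hG₂, hx₂⟩ := hb
        by_contra hne
        have hda : 1 ≤ deg 𝓕 x a :=
          Finset.card_pos.2 ⟨G₁, mem_filter.2 ⟨hG₁, hx₁⟩⟩
        have hdb : 1 ≤ deg 𝓕 x b :=
          Finset.card_pos.2 ⟨G₂, mem_filter.2 ⟨hG₂, hx₂⟩⟩
        have h1 := m_pos hdc hov hne hda hdb
        have h2 := EE_zero hsym hE0 a b hne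
        omega
      omega
    · intro k
      have h1 : (0:ℝ) ≤ (Real.sqrt KN + 1) / Real.sqrt n := by positivity
      have h2 : (0:ℝ) ≤ ((𝓕 k).card : ℝ) := by positivity
      nlinarith
  · -- main case
    have hE1 : 1 ≤ E := by omega
    have hkex : ∀ x : Fin n, ∃ k : Fin ℓ, (𝓕 k).card ≤ 4 * ℓ * deg 𝓕 x k :=
      fun x => exists_kstar hl hov hsupp hmaxSS (mem_univ x)
    choose k1 hk1 using hkex
    have hk2ex : ∀ x : Fin n, ∃ k' ∈ univ.erase (k1 x),
        ∀ j ∈ univ.erase (k1 x),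
          (deg 𝓕 x j : ℝ) / ((𝓕 j).card : ℝ) ≤ (deg 𝓕 x k' : ℝ) / ((𝓕 k').card : ℝ) := by
      intro x
      apply Finset.exists_max_image
      have h0 : 0 < (univ.erase (k1 x)).card := by
        rw [card_erase_of_mem (mem_univ _), card_univ, Fintype.card_fin]
        omega
      exact Finset.card_pos.1 h0
    choose k2 hk2mem hk2max using hk2ex
    have hk21 : ∀ x, k2 x ≠ k1 x := fun x => (mem_erase.1 (hk2mem x)).1
    set 𝓕' : Fin ℓ → Finset (Finset (Fin n)) :=
      fun k => (𝓕 k).filter (fun F => ∀ x ∈ F, k = k1 x ∨ k = k2 x) with h𝓕'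
    refine ⟨𝓕', fun k => filter_subset _ _, ?_, ?_⟩
    · -- condition (1)
      intro x
      have h2' : ({k1 x, k2 x} : Finset (Fin ℓ)).card ≤ 2 := by
        calc ({k1 x, k2 x} : Finset (Fin ℓ)).card
            ≤ ({k2 x} : Finset (Fin ℓ)).card + 1 := card_insert_le _ _
          _ = 2 := by rw [card_singleton]
      refine le_trans (card_le_card ?_) h2'
      intro k hk
      rw [mem_filter] at hk
      obtain ⟨-, G, hG, hxG⟩ := hk
      rw [h𝓕', mem_filter] at hG
      have := hG.2 x hxG
      rw [mem_insert, mem_singleton]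
      exact this
    · -- condition (2)
      intro k
      set Bad : Finset (Fin n) := univ.filter (fun x => ¬(k = k1 x ∨ k = k2 x)) with hBad
      have hrm : (𝓕 k).card ≤ (𝓕' k).card + ∑ x ∈ Bad, deg 𝓕 x k := by
        have hsub : 𝓕 k ⊆ 𝓕' k ∪ Bad.biUnion (fun x => (𝓕 k).filter (fun F => x ∈ F)) := by
          intro F hF
          rw [mem_union]
          by_cases hgood : ∀ x ∈ F, k = k1 x ∨ k = k2 x
          · left; rw [h𝓕', mem_filter]; exact ⟨hF, hgood⟩
          · right
            push_neg at hgood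
            obtain ⟨x, hxF, hxbad⟩ := hgood
            rw [mem_biUnion]
            refine ⟨x, ?_, mem_filter.2 ⟨hF, hxF⟩⟩
            rw [hBad, mem_filter]
            constructor
            · exact mem_univ x
            · push_neg
              exact hxbad
        calc (𝓕 k).card
            ≤ (𝓕' k ∪ Bad.biUnion (fun x => (𝓕 k).filter (fun F => x ∈ F))).card :=
              card_le_card hsub
          _ ≤ (𝓕' k).card + (Bad.biUnion (fun x => (𝓕 k).filter (fun F => x ∈ F))).card :=
              card_union_le _ _
          _ ≤ (𝓕' k).card + ∑ x ∈ Bad, deg 𝓕 x k :=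
              Nat.add_le_add_left card_biUnion_le _
      -- pointwise key bound in ℕ (squared)
      have hkey : ∀ x ∈ Bad, deg 𝓕 x k ^ 2 * n ^ 3 ≤ KN * (𝓕 k).card ^ 2 := by
        intro x hx
        rw [hBad, mem_filter] at hx
        have hxbad := hx.2
        push_neg at hxbad
        obtain ⟨hxk1, hxk2⟩ := hxbad
        by_cases hdk : deg 𝓕 x k = 0
        · rw [hdk]; simp
        · have hdk1 : 1 ≤ deg 𝓕 x k := by omega
          have hd1 : 1 ≤ deg 𝓕 x (k1 x) := by
            by_contra h
            push_neg at h
            have h0 : deg 𝓕 x (k1 x) = 0 := by omega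
            have h1 := hk1 x
            rw [h0, Nat.mul_zero] at h1
            have := hpos (k1 x)
            omega
          have hkmem : k ∈ univ.erase (k1 x) := mem_erase.2 ⟨hxk1, mem_univ k⟩
          have hfr := hk2max x k hkmem
          have hakpos : (0:ℝ) < ((𝓕 k).card : ℝ) := by exact_mod_cast hpos k
          have ha2pos : (0:ℝ) < ((𝓕 (k2 x)).card : ℝ) := by exact_mod_cast hpos (k2 x)
          have hc1 : deg 𝓕 x k * (𝓕 (k2 x)).card ≤ deg 𝓕 x (k2 x) * (𝓕 k).card := by
            rw [div_le_div_iff₀ hakpos ha2pos] at hfr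
            exact_mod_cast hfr
          have hd2 : 1 ≤ deg 𝓕 x (k2 x) := by
            by_contra h
            push_neg at h
            have h0 : deg 𝓕 x (k2 x) = 0 := by omega
            rw [h0, Nat.zero_mul, Nat.le_zero, Nat.mul_eq_zero] at hc1
            rcases hc1 with h' | h'
            · omega
            · have := hpos (k2 x); omega
          obtain ⟨m₃, hsym₃, hE₃, htriple⟩ := triple_bound hl hsym hov hdc hsupp
            hxk2 hxk1 (hk21 x) hdk1 hd2 hd1
          have hcard_er : ((univ : Finset (Fin n)).erase x).card = n - 1 := by
            rw [card_erase_of_mem (mem_univ x), card_univ, Fintype.card_fin]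
          have hub := SS_upper (n := n) hl (EE m₃) m₃ hsym₃ rfl (univ.erase x)
          rw [hcard_er] at hub
          have hn1 : n - 1 + 1 = n := by omega
          rw [hn1] at hub
          have hAle : (D + 2) ^ (EE m₃ + 1) ≤ A := by
            rw [hAdef]
            apply Nat.pow_le_pow_right (by omega)
            omega
          set R : ℕ := 2 ^ ℓ * (A * 2 ^ (n - 1) * n ^ (EE m₃)) with hRdef
          have hc3 : deg 𝓕 x k * deg 𝓕 x (k2 x) * deg 𝓕 x (k1 x) *
              ∏ j ∈ univ \ ({k, k2 x, k1 x} : Finset (Fin ℓ)), (𝓕 j).card ≤ R := by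
            refine le_trans htriple ?_
            rw [hRdef]
            apply Nat.mul_le_mul_left
            calc SS n ℓ m₃ (univ.erase x)
                ≤ (D + 2) ^ (EE m₃ + 1) * 2 ^ (n - 1) * n ^ (EE m₃) := hub
              _ ≤ A * 2 ^ (n - 1) * n ^ (EE m₃) :=
                  Nat.mul_le_mul_right _ (Nat.mul_le_mul_right _ hAle)
          set z : ℕ := n / E with hzdef
          have hEz : E * z ≤ (univ : Finset (Fin n)).card := by
            rw [card_univ, Fintype.card_fin, hzdef, Nat.mul_comm]
            exact Nat.div_mul_le_self n E
          have hlb := SS_lower (n := n) hl E m hsym rfl univ z hEz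
          rw [card_univ, Fintype.card_fin, ← hmaxSS] at hlb
          have hnlt : n < E * (z + 1) := by
            have h1 := Nat.div_add_mod n E
            rw [← hzdef] at h1
            have h2 : n % E < E := Nat.mod_lt _ (by omega)
            have h3 : E * (z + 1) = E * z + E := by ring
            omega
          have hc6 : n ^ E ≤ E ^ E * (z + 1) ^ E := by
            calc n ^ E ≤ (E * (z + 1)) ^ E := Nat.pow_le_pow_left (le_of_lt hnlt) E
              _ = E ^ E * (z + 1) ^ E := mul_pow E (z + 1) E
          set t : Finset (Fin ℓ) := {k, k2 x, k1 x} with htdef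
          have hprodt : ∏ j ∈ t, (𝓕 j).card
              = (𝓕 k).card * (𝓕 (k2 x)).card * (𝓕 (k1 x)).card := by
            rw [htdef, Finset.prod_insert (by simp [hxk2, hxk1]),
              Finset.prod_insert (by simp [hk21 x]), Finset.prod_singleton, mul_assoc]
          have hP : pr 𝓕 = (𝓕 k).card * (𝓕 (k2 x)).card * (𝓕 (k1 x)).card
              * ∏ j ∈ univ \ t, (𝓕 j).card := by
            rw [pr, ← Finset.prod_sdiff (subset_univ t), hprodt]
            ring
          -- step 2 : dk² · pr𝓕 ≤ 4ℓ · ak² · R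
          have hstep2 : deg 𝓕 x k ^ 2 * pr 𝓕
              ≤ 4 * ℓ * (𝓕 k).card ^ 2 * R := by
            calc deg 𝓕 x k ^ 2 * pr 𝓕
                = (deg 𝓕 x k * (𝓕 (k2 x)).card) *
                  (deg 𝓕 x k * ((𝓕 k).card * ((𝓕 (k1 x)).card * ∏ j ∈ univ \ t, (𝓕 j).card))) := by
                  rw [hP]; ring
              _ ≤ (deg 𝓕 x (k2 x) * (𝓕 k).card) *
                  (deg 𝓕 x k * ((𝓕 k).card * ((𝓕 (k1 x)).card * ∏ j ∈ univ \ t, (𝓕 j).card))) :=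
                  Nat.mul_le_mul_right _ hc1
              _ = ((𝓕 k).card * (𝓕 k).card) *
                  ((deg 𝓕 x k * deg 𝓕 x (k2 x)) * ((𝓕 (k1 x)).card * ∏ j ∈ univ \ t, (𝓕 j).card)) := by
                  ring
              _ ≤ ((𝓕 k).card * (𝓕 k).card) *
                  ((deg 𝓕 x k * deg 𝓕 x (k2 x)) * ((4 * ℓ * deg 𝓕 x (k1 x)) * ∏ j ∈ univ \ t, (𝓕 j).card)) := by
                  apply Nat.mul_le_mul_left
                  apply Nat.mul_le_mul_left
                  exact Nat.mul_le_mul_right _ (hk1 x)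
              _ = 4 * ℓ * ((𝓕 k).card * (𝓕 k).card) *
                  (deg 𝓕 x k * deg 𝓕 x (k2 x) * deg 𝓕 x (k1 x) * ∏ j ∈ univ \ t, (𝓕 j).card) := by
                  ring
              _ ≤ 4 * ℓ * ((𝓕 k).card * (𝓕 k).card) * R := Nat.mul_le_mul_left _ hc3
              _ = 4 * ℓ * (𝓕 k).card ^ 2 * R := by ring
          -- assemble, multiplying by M := E^E * ((z+1)^E * 2^n)
          have hmono : 2 ^ (n - 1) * n ^ E ≤ 2 ^ n * (E ^ E * (z + 1) ^ E) :=
            Nat.mul_le_mul (Nat.pow_le_pow_right (by omega) (by omega)) hc6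
          have key2 : deg 𝓕 x k ^ 2 * n ^ 3 * (E ^ E * ((z + 1) ^ E * 2 ^ n))
              ≤ KN * (𝓕 k).card ^ 2 * (E ^ E * ((z + 1) ^ E * 2 ^ n)) := by
            calc deg 𝓕 x k ^ 2 * n ^ 3 * (E ^ E * ((z + 1) ^ E * 2 ^ n))
                = (n ^ 3 * E ^ E) * (deg 𝓕 x k ^ 2 * ((z + 1) ^ E * 2 ^ n)) := by ring
              _ ≤ (n ^ 3 * E ^ E) * (deg 𝓕 x k ^ 2 * pr 𝓕) :=
                  Nat.mul_le_mul_left _ (Nat.mul_le_mul_left _ hlb)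
              _ ≤ (n ^ 3 * E ^ E) * (4 * ℓ * (𝓕 k).card ^ 2 * R) :=
                  Nat.mul_le_mul_left _ hstep2
              _ = KN * (𝓕 k).card ^ 2 * (2 ^ (n - 1) * (n ^ 3 * n ^ (EE m₃))) := by
                  rw [hRdef, hKNdef]; ring
              _ = KN * (𝓕 k).card ^ 2 * (2 ^ (n - 1) * n ^ E) := by
                  rw [← pow_add]
                  have h3E : 3 + EE m₃ = E := by omega
                  rw [h3E]
              _ ≤ KN * (𝓕 k).card ^ 2 * (2 ^ n * (E ^ E * (z + 1) ^ E)) :=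
                  Nat.mul_le_mul_left _ hmono
              _ = KN * (𝓕 k).card ^ 2 * (E ^ E * ((z + 1) ^ E * 2 ^ n)) := by ring
          have hMpos : 0 < E ^ E * ((z + 1) ^ E * 2 ^ n) := by
            have h1 : 0 < E := hE1
            positivity
          exact Nat.le_of_mul_le_mul_right key2 hMpos
      -- now the real-number conclusion
      have hnR : (0:ℝ) < (n:ℝ) := by exact_mod_cast hn
      have hsnpos : (0:ℝ) < Real.sqrt n := Real.sqrt_pos.2 hnR
      have hakR : (0:ℝ) ≤ ((𝓕 k).card : ℝ) := by positivity
      have hptR : ∀ x ∈ Bad, (deg 𝓕 x k : ℝ) * ((n:ℝ) * Real.sqrt n)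
          ≤ Real.sqrt KN * ((𝓕 k).card : ℝ) := by
        intro x hx
        have hc : ((deg 𝓕 x k : ℝ)) ^ 2 * (n:ℝ) ^ 3 ≤ (KN:ℝ) * ((𝓕 k).card:ℝ) ^ 2 := by
          exact_mod_cast hkey x hx
        have h1 : (0:ℝ) ≤ (deg 𝓕 x k : ℝ) * ((n:ℝ) * Real.sqrt n) := by positivity
        have h2 : (0:ℝ) ≤ Real.sqrt KN * ((𝓕 k).card : ℝ) := by positivity
        have hsq : ((deg 𝓕 x k : ℝ) * ((n:ℝ) * Real.sqrt n)) ^ 2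
            ≤ (Real.sqrt KN * ((𝓕 k).card : ℝ)) ^ 2 := by
          have hsn : (Real.sqrt n) ^ 2 = (n:ℝ) := Real.sq_sqrt (by positivity)
          have hsK : (Real.sqrt KN) ^ 2 = (KN:ℝ) := Real.sq_sqrt (by positivity)
          calc ((deg 𝓕 x k : ℝ) * ((n:ℝ) * Real.sqrt n)) ^ 2
              = (deg 𝓕 x k : ℝ) ^ 2 * ((n:ℝ) ^ 2 * (Real.sqrt n) ^ 2) := by ring
            _ = (deg 𝓕 x k : ℝ) ^ 2 * (n:ℝ) ^ 3 := by rw [hsn]; ring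
            _ ≤ (KN:ℝ) * ((𝓕 k).card:ℝ) ^ 2 := hc
            _ = (Real.sqrt KN * ((𝓕 k).card : ℝ)) ^ 2 := by rw [mul_pow, hsK]
        calc (deg 𝓕 x k : ℝ) * ((n:ℝ) * Real.sqrt n)
            = Real.sqrt (((deg 𝓕 x k : ℝ) * ((n:ℝ) * Real.sqrt n)) ^ 2) :=
              (Real.sqrt_sq h1).symm
          _ ≤ Real.sqrt ((Real.sqrt KN * ((𝓕 k).card : ℝ)) ^ 2) := Real.sqrt_le_sqrt hsq
          _ = Real.sqrt KN * ((𝓕 k).card : ℝ) := Real.sqrt_sq h2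
      -- sum over Bad
      have hsum : (∑ x ∈ Bad, (deg 𝓕 x k : ℝ)) * Real.sqrt n
          ≤ Real.sqrt KN * ((𝓕 k).card : ℝ) := by
        have hs1 : (∑ x ∈ Bad, (deg 𝓕 x k : ℝ)) * ((n:ℝ) * Real.sqrt n)
            ≤ (n:ℝ) * (Real.sqrt KN * ((𝓕 k).card : ℝ)) := by
          rw [Finset.sum_mul]
          calc ∑ x ∈ Bad, (deg 𝓕 x k : ℝ) * ((n:ℝ) * Real.sqrt n)
              ≤ ∑ _x ∈ Bad, Real.sqrt KN * ((𝓕 k).card : ℝ) := Finset.sum_le_sum hptR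
            _ = (Bad.card : ℝ) * (Real.sqrt KN * ((𝓕 k).card : ℝ)) := by
                rw [Finset.sum_const, nsmul_eq_mul]
            _ ≤ (n:ℝ) * (Real.sqrt KN * ((𝓕 k).card : ℝ)) := by
                apply mul_le_mul_of_nonneg_right _ (by positivity)
                have : Bad.card ≤ n := by
                  calc Bad.card ≤ (univ : Finset (Fin n)).card := card_le_card (filter_subset _ _)
                    _ = n := by rw [card_univ, Fintype.card_fin]
                exact_mod_cast this
        have he : (∑ x ∈ Bad, (deg 𝓕 x k : ℝ)) * ((n:ℝ) * Real.sqrt n)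
            = (n:ℝ) * ((∑ x ∈ Bad, (deg 𝓕 x k : ℝ)) * Real.sqrt n) := by ring
        rw [he] at hs1
        exact le_of_mul_le_mul_left hs1 hnR
      -- final inequality
      have hcast : ((𝓕 k).card : ℝ) ≤ ((𝓕' k).card : ℝ) + ∑ x ∈ Bad, (deg 𝓕 x k : ℝ) := by
        have := hrm
        push_cast
        exact_mod_cast this
      have hsum2 : ∑ x ∈ Bad, (deg 𝓕 x k : ℝ)
          ≤ (Real.sqrt KN + 1) / Real.sqrt n * ((𝓕 k).card : ℝ) := by
        rw [div_mul_eq_mul_div, le_div_iff₀ hsnpos]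
        calc (∑ x ∈ Bad, (deg 𝓕 x k : ℝ)) * Real.sqrt n
            ≤ Real.sqrt KN * ((𝓕 k).card : ℝ) := hsum
          _ ≤ (Real.sqrt KN + 1) * ((𝓕 k).card : ℝ) := by nlinarith
      have hexp : (1 - (Real.sqrt KN + 1) / Real.sqrt n) * ((𝓕 k).card : ℝ)
          = ((𝓕 k).card : ℝ) - (Real.sqrt KN + 1) / Real.sqrt n * ((𝓕 k).card : ℝ) := by
        ring
      rw [hexp]
      linarith
end
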